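/- arXiv:2104.14620 — 6 statements merged into one kernel-verified Lean document; each statement's English description precedes it below -/
import Mathlib

section
/- Fix (r₁, r₂) ∈ ℝ². For any pair of real-valued random variables (θ¹, θ²) and an i.i.d. sample (θ¹ᵢ, θ²ᵢ), i = 1,…,n, from it, the difference √n · D_c^{(n)}(r₁, r₂) − n^{−1/2} Σ_{i=1}^{n} { cos(r₁θ¹ᵢ + r₂θ²ᵢ) − J_{1c}(r₁)J_{2c}(r₂) + J_{1s}(r₁)J_{2s}(r₂) − J_{2c}(r₂)(cos(r₁θ¹ᵢ) − J_{1c}(r₁)) − J_{1c}(r₁)(cos(r₂θ²ᵢ) − J_{2c}(r₂)) + J_{2s}(r₂)(sin(r₁θ¹ᵢ) − J_{1s}(r₁)) + J_{1s}(r₁)(sin(r₂θ²ᵢ) − J_{2s}(r₂)) } converges to 0 in probability as n → ∞. -/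
open MeasureTheory ProbabilityTheory Filter Real
open scoped NNReal BigOperators Topology

/-!
Write `Ā, B̄, S̄, T̄` for the sample means of `cos (r₁θ¹), cos (r₂θ²), sin (r₁θ¹), sin (r₂θ²)` and
`a, b, s, t` for their expectations. The linear terms are exactly the first-order expansion of the
products in `D_c`, so the remainder is the second-order term `√n ((S̄ - s)(T̄ - t) - (Ā - a)(B̄ - b))`.
By pairwise independence each centred mean of these bounded variables has second moment at most
`1 / n`, so by AM-GM each product, multiplied by `√n`, has `L¹`-norm at most `1 / √n`.
-/

/-- The cosine statistic `D_c^{(n)}(r₁,r₂)` computed from the sample `(a i, b i)`, `i < n`. -/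
noncomputable def Dc (r1 r2 : ℝ) (n : ℕ) (a b : ℕ → ℝ) : ℝ :=
  (n : ℝ)⁻¹ * ∑ i ∈ Finset.range n, Real.cos (r1 * a i + r2 * b i)
    - ((n : ℝ)⁻¹ * ∑ i ∈ Finset.range n, Real.cos (r1 * a i))
        * ((n : ℝ)⁻¹ * ∑ i ∈ Finset.range n, Real.cos (r2 * b i))
    + ((n : ℝ)⁻¹ * ∑ i ∈ Finset.range n, Real.sin (r1 * a i))
        * ((n : ℝ)⁻¹ * ∑ i ∈ Finset.range n, Real.sin (r2 * b i))

noncomputable def sampleMean (n : ℕ) (x : ℕ → ℝ) : ℝ :=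
  (n : ℝ)⁻¹ * ∑ i ∈ Finset.range n, x i

lemma Dc_eq_sampleMean (r1 r2 : ℝ) (n : ℕ) (a b : ℕ → ℝ) :
    Dc r1 r2 n a b = sampleMean n (fun i => Real.cos (r1 * a i + r2 * b i))
      - sampleMean n (fun i => Real.cos (r1 * a i)) * sampleMean n (fun i => Real.cos (r2 * b i))
      + sampleMean n (fun i => Real.sin (r1 * a i)) * sampleMean n (fun i => Real.sin (r2 * b i)) :=
  rfl

lemma inv_sqrt_mul_sum_eq_sqrt_mul_sampleMean (n : ℕ) (x : ℕ → ℝ) :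
    (√n)⁻¹ * ∑ i ∈ Finset.range n, x i = √n * sampleMean n x := by
  rw [sampleMean, ← mul_assoc, ← div_eq_mul_inv, Real.sqrt_div_self', one_div]

lemma sqrt_mul_sub_inv_sqrt_mul_sum_eq (n : ℕ) (u x y z w : ℕ → ℝ) (cx cy cz cw : ℝ) :
    √n * (sampleMean n u - sampleMean n x * sampleMean n y + sampleMean n z * sampleMean n w)
      - (√n)⁻¹ * ∑ i ∈ Finset.range n, (u i - cx * cy + cz * cw - cy * (x i - cx)
          - cx * (y i - cy) + cw * (z i - cz) + cz * (w i - cw))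
      = √n * ((sampleMean n z - cz) * (sampleMean n w - cw))
          - √n * ((sampleMean n x - cx) * (sampleMean n y - cy)) := by
  rcases eq_or_ne n 0 with rfl | hn
  · simp
  rw [inv_sqrt_mul_sum_eq_sqrt_mul_sampleMean]
  simp only [sampleMean, Finset.sum_add_distrib, Finset.sum_sub_distrib, ← Finset.mul_sum,
    Finset.sum_const, Finset.card_range, nsmul_eq_mul]
  field_simp
  ring

lemma sampleMean_fun_eq_inv_mul_sum {Ω : Type*} (n : ℕ) (X : ℕ → Ω → ℝ) :
    (fun ω => sampleMean n (fun i => X i ω))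
      = fun ω => (n : ℝ)⁻¹ * (∑ i ∈ Finset.range n, X i) ω := by
  simp [sampleMean, Finset.sum_apply]

lemma MeasureTheory.TendstoInMeasure.sub {α ι E : Type*} [MeasurableSpace α] {μ : Measure α}
    [SeminormedAddCommGroup E] {l : Filter ι} {f f' : ι → α → E} {g g' : α → E}
    (hf : TendstoInMeasure μ f l g) (hf' : TendstoInMeasure μ f' l g') :
    TendstoInMeasure μ (fun i x => f i x - f' i x) l (fun x => g x - g' x) := by
  intro ε hε
  have hε2 : 0 < ε / 2 := ENNReal.half_pos hε.ne'
  refine tendsto_of_tendsto_of_tendsto_of_le_of_le tendsto_const_nhds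
    (by simpa using (hf _ hε2).add (hf' _ hε2)) (fun _ => zero_le) fun i => ?_
  refine (measure_mono fun x hx => ?_).trans (measure_union_le _ _)
  by_contra! hlt
  simp only [Set.mem_union, Set.mem_ofPred_eq, not_or, not_le] at hlt hx
  have hsub : edist (f i x - f' i x) (g x - g' x)
      ≤ edist (f i x) (g x) + edist (f' i x) (g' x) := by
    simpa [sub_eq_add_neg, edist_neg_neg] using edist_add_add_le (f i x) (-f' i x) (g x) (-g' x)
  exact hx.not_gt <| hsub.trans_lt <| by
    simpa [ENNReal.add_halves] using ENNReal.add_lt_add hlt.1 hlt.2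

section

variable {Ω : Type*} [MeasurableSpace Ω] {μ : Measure Ω}

lemma integral_norm_sqrt_mul_mul_le {P Q : Ω → ℝ} (hP : MemLp P 2 μ) (hQ : MemLp Q 2 μ)
    {c : ℝ} {n : ℕ} (hn : n ≠ 0) (hPc : ∫ ω, P ω ^ 2 ∂μ ≤ c / n)
    (hQc : ∫ ω, Q ω ^ 2 ∂μ ≤ c / n) :
    ∫ ω, ‖√n * (P ω * Q ω)‖ ∂μ ≤ c / √n := by
  have hsq : Integrable (fun ω => √n * ((P ω ^ 2 + Q ω ^ 2) / 2)) μ :=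
    ((hP.integrable_sq.add hQ.integrable_sq).div_const 2).const_mul _
  calc ∫ ω, ‖√n * (P ω * Q ω)‖ ∂μ ≤ ∫ ω, √n * ((P ω ^ 2 + Q ω ^ 2) / 2) ∂μ := by
        refine integral_mono_of_nonneg (ae_of_all _ fun _ => norm_nonneg _) hsq
          (ae_of_all _ fun ω => ?_)
        dsimp only
        rw [Real.norm_eq_abs, abs_mul, abs_of_nonneg (sqrt_nonneg _), abs_mul]
        gcongr
        nlinarith [sq_abs (P ω), sq_abs (Q ω), sq_nonneg (|P ω| - |Q ω|)]
    _ = √n * ((∫ ω, P ω ^ 2 ∂μ + ∫ ω, Q ω ^ 2 ∂μ) / 2) := by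
        rw [integral_const_mul, integral_div, integral_add hP.integrable_sq hQ.integrable_sq]
    _ ≤ √n * ((c / n + c / n) / 2) := by gcongr
    _ = c / √n := by
        have : (0 : ℝ) < √n := sqrt_pos.mpr (by positivity)
        field_simp
        rw [sq_sqrt n.cast_nonneg]
        ring

lemma tendstoInMeasure_sqrt_mul_mul {P Q : ℕ → Ω → ℝ} (hP : ∀ n, MemLp (P n) 2 μ)
    (hQ : ∀ n, MemLp (Q n) 2 μ) {c : ℝ} (hPc : ∀ n ≠ 0, ∫ ω, P n ω ^ 2 ∂μ ≤ c / n)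
    (hQc : ∀ n ≠ 0, ∫ ω, Q n ω ^ 2 ∂μ ≤ c / n) :
    TendstoInMeasure μ (fun (n : ℕ) ω => √n * (P n ω * Q n ω)) atTop (fun _ => 0) := by
  have hint : ∀ n : ℕ, Integrable (fun ω => √n * (P n ω * Q n ω)) μ := fun n =>
    ((hP n).integrable_mul (hQ n)).const_mul _
  have hbound : ∀ n : ℕ, n ≠ 0 →
      eLpNorm (fun ω => √n * (P n ω * Q n ω)) 1 μ ≤ ENNReal.ofReal (c / √n) := fun n hn => by
    rw [eLpNorm_one_eq_lintegral_enorm, ← ofReal_integral_norm_eq_lintegral_enorm (hint n)]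
    exact ENNReal.ofReal_le_ofReal
      (integral_norm_sqrt_mul_mul_le (hP n) (hQ n) hn (hPc n hn) (hQc n hn))
  have hlim : Tendsto (fun n : ℕ => ENNReal.ofReal (c / √n)) atTop (𝓝 0) := by
    simpa using ENNReal.tendsto_ofReal (tendsto_const_nhds.div_atTop
      (tendsto_sqrt_atTop.comp tendsto_natCast_atTop_atTop))
  refine tendstoInMeasure_of_tendsto_eLpNorm one_ne_zero (fun n => (hint n).aestronglyMeasurable)
    aestronglyMeasurable_const ?_
  simp only [Pi.sub_def, sub_zero]
  exact tendsto_of_tendsto_of_tendsto_of_le_of_le' tendsto_const_nhds hlim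
    (Eventually.of_forall fun _ => zero_le) ((eventually_ne_atTop 0).mono hbound)

lemma memLp_sampleMean {X : ℕ → Ω → ℝ} {p : ENNReal} (hX : ∀ i, MemLp (X i) p μ) (n : ℕ) :
    MemLp (fun ω => sampleMean n (fun i => X i ω)) p μ := by
  rw [sampleMean_fun_eq_inv_mul_sum]
  exact (memLp_finsetSum' _ fun i _ => hX i).const_mul _

lemma integral_sq_sampleMean_sub_le [IsFiniteMeasure μ] {X : ℕ → Ω → ℝ}
    (hX : ∀ i, MemLp (X i) 2 μ) (hindep : Pairwise fun i j => IndepFun (X i) (X j) μ)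
    {m v : ℝ} (hm : ∀ i, μ[X i] = m) (hvar : ∀ i, Var[X i; μ] ≤ v) {n : ℕ} (hn : n ≠ 0) :
    ∫ ω, (sampleMean n (fun i => X i ω) - m) ^ 2 ∂μ ≤ v / n := by
  have hmean : μ[fun ω => sampleMean n (fun i => X i ω)] = m := by
    simp [sampleMean_fun_eq_inv_mul_sum, integral_const_mul,
      integral_finsetSum _ fun i _ => (hX i).integrable one_le_two, hm, hn]
  calc ∫ ω, (sampleMean n (fun i => X i ω) - m) ^ 2 ∂μ
      = Var[fun ω => sampleMean n (fun i => X i ω); μ] := by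
        rw [variance_eq_integral (memLp_sampleMean hX n).aemeasurable, hmean]
    _ = (n : ℝ)⁻¹ ^ 2 * ∑ i ∈ Finset.range n, Var[X i; μ] := by
        rw [sampleMean_fun_eq_inv_mul_sum, variance_const_mul,
          IndepFun.variance_sum (fun i _ => hX i) fun i _ j _ hij => hindep hij]
    _ ≤ (n : ℝ)⁻¹ ^ 2 * (n * v) := by
        gcongr
        simpa using Finset.sum_le_sum fun i (_ : i ∈ Finset.range n) => hvar i
    _ = v / n := by field_simp

variable {E : Type*} [MeasurableSpace E] {Θ : ℕ → Ω → E} {Z : Ω → E}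

lemma memLp_comp_of_abs_le_one [IsFiniteMeasure μ] (hZ : AEMeasurable Z μ) {φ : E → ℝ}
    (hφ : Measurable φ) (hφ_le : ∀ x, |φ x| ≤ 1) (p : ENNReal) :
    MemLp (fun ω => φ (Z ω)) p μ :=
  .of_bound (hφ.comp_aemeasurable hZ).aestronglyMeasurable 1
    (ae_of_all _ fun ω => by simpa using hφ_le (Z ω))

lemma integral_sq_sampleMean_comp_sub_le [IsProbabilityMeasure μ]
    (hindep : Pairwise fun i j => IndepFun (Θ i) (Θ j) μ)
    (hident : ∀ i, IdentDistrib (Θ i) Z μ μ) {φ : E → ℝ} (hφ : Measurable φ)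
    (hφ_le : ∀ x, |φ x| ≤ 1) {n : ℕ} (hn : n ≠ 0) :
    ∫ ω, (sampleMean n (fun i => φ (Θ i ω)) - ∫ ω, φ (Z ω) ∂μ) ^ 2 ∂μ ≤ 1 / n := by
  refine integral_sq_sampleMean_sub_le (X := fun i ω => φ (Θ i ω))
    (fun i => memLp_comp_of_abs_le_one (hident i).aemeasurable_fst hφ hφ_le 2)
    (fun i j hij => (hindep hij).comp hφ hφ) (fun i => ((hident i).comp hφ).integral_eq)
    (fun i => ?_) hn
  simpa using variance_le_sq_of_bounded (a := -1) (b := 1)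
    (ae_of_all _ fun ω => abs_le.mp (hφ_le _)) (hφ.comp_aemeasurable (hident i).aemeasurable_fst)

lemma tendstoInMeasure_sqrt_mul_sampleMean_sub_mul [IsProbabilityMeasure μ]
    (hindep : Pairwise fun i j => IndepFun (Θ i) (Θ j) μ)
    (hident : ∀ i, IdentDistrib (Θ i) Z μ μ) {φ ψ : E → ℝ} (hφ : Measurable φ)
    (hψ : Measurable ψ) (hφ_le : ∀ x, |φ x| ≤ 1) (hψ_le : ∀ x, |ψ x| ≤ 1) :
    TendstoInMeasure μ (fun (n : ℕ) ω =>
      √n * ((sampleMean n (fun i => φ (Θ i ω)) - ∫ ω, φ (Z ω) ∂μ)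
        * (sampleMean n (fun i => ψ (Θ i ω)) - ∫ ω, ψ (Z ω) ∂μ))) atTop (fun _ => 0) := by
  have hdev : ∀ χ : E → ℝ, Measurable χ → (∀ x, |χ x| ≤ 1) → ∀ n,
      MemLp (fun ω => sampleMean n (fun i => χ (Θ i ω)) - ∫ ω, χ (Z ω) ∂μ) 2 μ :=
    fun χ hχ hχ_le n => (memLp_sampleMean (fun i =>
      memLp_comp_of_abs_le_one (hident i).aemeasurable_fst hχ hχ_le 2) n).sub (memLp_const _)
  exact tendstoInMeasure_sqrt_mul_mul (hdev φ hφ hφ_le) (hdev ψ hψ hψ_le)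
    (fun n => integral_sq_sampleMean_comp_sub_le hindep hident hφ hφ_le)
    (fun n => integral_sq_sampleMean_comp_sub_le hindep hident hψ hψ_le)

end

theorem Dc_asymptotic_linearisation_general
    {Ω : Type*} [MeasurableSpace Ω] (μ : Measure Ω) [IsProbabilityMeasure μ]
    (θ1 θ2 : Ω → ℝ)
    (Θ : ℕ → Ω → ℝ × ℝ)
    (hiid : iIndepFun Θ μ)
    (hident : ∀ i, IdentDistrib (Θ i) (fun ω => (θ1 ω, θ2 ω)) μ μ)
    (r1 r2 : ℝ) :
    TendstoInMeasure μ
      (fun (n : ℕ) ω =>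
        Real.sqrt n * Dc r1 r2 n (fun i => (Θ i ω).1) (fun i => (Θ i ω).2)
          - (Real.sqrt n)⁻¹ * ∑ i ∈ Finset.range n,
              (Real.cos (r1 * (Θ i ω).1 + r2 * (Θ i ω).2)
                - (∫ ω', Real.cos (r1 * θ1 ω') ∂μ) * (∫ ω', Real.cos (r2 * θ2 ω') ∂μ)
                + (∫ ω', Real.sin (r1 * θ1 ω') ∂μ) * (∫ ω', Real.sin (r2 * θ2 ω') ∂μ)
                - (∫ ω', Real.cos (r2 * θ2 ω') ∂μ)
                    * (Real.cos (r1 * (Θ i ω).1) - ∫ ω', Real.cos (r1 * θ1 ω') ∂μ)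
                - (∫ ω', Real.cos (r1 * θ1 ω') ∂μ)
                    * (Real.cos (r2 * (Θ i ω).2) - ∫ ω', Real.cos (r2 * θ2 ω') ∂μ)
                + (∫ ω', Real.sin (r2 * θ2 ω') ∂μ)
                    * (Real.sin (r1 * (Θ i ω).1) - ∫ ω', Real.sin (r1 * θ1 ω') ∂μ)
                + (∫ ω', Real.sin (r1 * θ1 ω') ∂μ)
                    * (Real.sin (r2 * (Θ i ω).2) - ∫ ω', Real.sin (r2 * θ2 ω') ∂μ)))
      atTop (fun _ => (0 : ℝ)) := by
  have hindep : Pairwise fun i j => IndepFun (Θ i) (Θ j) μ := fun i j hij => hiid.indepFun hij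
  have hsin := tendstoInMeasure_sqrt_mul_sampleMean_sub_mul hindep hident
    (by fun_prop : Measurable fun x : ℝ × ℝ => Real.sin (r1 * x.1))
    (by fun_prop : Measurable fun x : ℝ × ℝ => Real.sin (r2 * x.2))
    (fun _ => abs_sin_le_one _) (fun _ => abs_sin_le_one _)
  have hcos := tendstoInMeasure_sqrt_mul_sampleMean_sub_mul hindep hident
    (by fun_prop : Measurable fun x : ℝ × ℝ => Real.cos (r1 * x.1))
    (by fun_prop : Measurable fun x : ℝ × ℝ => Real.cos (r2 * x.2))
    (fun _ => abs_cos_le_one _) (fun _ => abs_cos_le_one _)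
  refine (hsin.sub hcos).congr (fun n => ae_of_all _ fun ω => ?_) (by simp)
  dsimp only
  rw [Dc_eq_sampleMean]
  exact (sqrt_mul_sub_inv_sqrt_mul_sum_eq n _ _ _ _ _ _ _ _ _).symm

/-- Asymptotic linearisation of `√n · D_c^{(n)}(r₁,r₂)`: its difference with the normalized
sum of centred influence functions tends to `0` in probability. -/
theorem Dc_asymptotic_linearisation
    {Ω : Type*} [MeasurableSpace Ω] (μ : Measure Ω) [IsProbabilityMeasure μ]
    (θ1 θ2 : Ω → ℝ) (hθ1 : Measurable θ1) (hθ2 : Measurable θ2)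
    (Θ : ℕ → Ω → ℝ × ℝ) (hΘmeas : ∀ i, Measurable (Θ i))
    (hiid : iIndepFun Θ μ)
    (hident : ∀ i, IdentDistrib (Θ i) (fun ω => (θ1 ω, θ2 ω)) μ μ)
    (r1 r2 : ℝ) :
    TendstoInMeasure μ
      (fun (n : ℕ) ω =>
        Real.sqrt n * Dc r1 r2 n (fun i => (Θ i ω).1) (fun i => (Θ i ω).2)
          - (Real.sqrt n)⁻¹ * ∑ i ∈ Finset.range n,
              (Real.cos (r1 * (Θ i ω).1 + r2 * (Θ i ω).2)
                - (∫ ω', Real.cos (r1 * θ1 ω') ∂μ) * (∫ ω', Real.cos (r2 * θ2 ω') ∂μ)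
                + (∫ ω', Real.sin (r1 * θ1 ω') ∂μ) * (∫ ω', Real.sin (r2 * θ2 ω') ∂μ)
                - (∫ ω', Real.cos (r2 * θ2 ω') ∂μ)
                    * (Real.cos (r1 * (Θ i ω).1) - ∫ ω', Real.cos (r1 * θ1 ω') ∂μ)
                - (∫ ω', Real.cos (r1 * θ1 ω') ∂μ)
                    * (Real.cos (r2 * (Θ i ω).2) - ∫ ω', Real.cos (r2 * θ2 ω') ∂μ)
                + (∫ ω', Real.sin (r2 * θ2 ω') ∂μ)
                    * (Real.sin (r1 * (Θ i ω).1) - ∫ ω', Real.sin (r1 * θ1 ω') ∂μ)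
                + (∫ ω', Real.sin (r1 * θ1 ω') ∂μ)
                    * (Real.sin (r2 * (Θ i ω).2) - ∫ ω', Real.sin (r2 * θ2 ω') ∂μ)))
      atTop (fun _ => (0 : ℝ)) :=
  Dc_asymptotic_linearisation_general μ θ1 θ2 Θ hiid hident r1 r2
end

section
/- Suppose θ¹ and θ² are independent and E[sin(zθ¹)] = 0 and E[sin(zθ²)] = 0 for every integer z (reflectively symmetric marginals). Define the efficient central sequence Δ_eff^{(n)} := n^{−1/2} Σ_{i=1}^{n} { cos(θ¹ᵢ − θ²ᵢ) − J_{1c}(1)J_{2c}(1) − J_{2c}(1)(cos(θ¹ᵢ) − J_{1c}(1)) − J_{1c}(1)(cos(θ²ᵢ) − J_{2c}(1)) }. Then √n · D_c^{(n)}(1, −1) − Δ_eff^{(n)} converges to 0 in probability as n → ∞. -/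
/-!
Writing `S(f) = n⁻¹ ∑ f(θᵢ)` for sample means, a direct computation gives
`√n · D_c(1, -1) - Δ_eff`
  `= √n · S(sin θ¹) S(sin (-θ²)) - √n · (S(cos θ¹) - J_{1c}) (S(cos θ²) - J_{2c})`.
Each of the four factors is a sample mean of bounded i.i.d. variables minus its expectation
(the sine moments vanish by symmetry), so by Chebyshev it is `O_P(n^{-1/2})`; hence both products,
multiplied by `√n`, are `O_P(n^{-1/2})` and tend to `0` in probability.
-/

open MeasureTheory ProbabilityTheory Filter Real
open scoped NNReal BigOperators Topology

section Chebyshev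

variable {Ω : Type*} [MeasurableSpace Ω] {μ : Measure Ω}

theorem measure_le_abs_sampleMean_sub_le [IsFiniteMeasure μ] {W : ℕ → Ω → ℝ}
    (hW : ∀ i, MemLp (W i) 2 μ) (hindep : Pairwise fun i j => IndepFun (W i) (W j) μ)
    {m K : ℝ} (hmean : ∀ i, μ[W i] = m) (hvar : ∀ i, variance (W i) μ ≤ K)
    {n : ℕ} (hn : 0 < n) {t : ℝ} (ht : 0 < t) :
    μ {ω | t ≤ |sampleMean n (fun i => W i ω) - m|} ≤ ENNReal.ofReal (K / (n * t ^ 2)) := by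
  have hnR : (0 : ℝ) < n := Nat.cast_pos.mpr hn
  set S := ∑ i ∈ Finset.range n, W i
  have hS : MemLp S 2 μ := memLp_finsetSum' _ fun i _ => hW i
  have hSmean : μ[S] = n * m := by
    simp only [S, Finset.sum_apply]
    rw [integral_finsetSum _ fun i _ => (hW i).integrable one_le_two]
    simp [hmean]
  have hSvar : variance S μ ≤ n * K := by
    rw [IndepFun.variance_sum (fun i _ => hW i) fun i _ j _ hij => hindep hij]
    simpa using Finset.sum_le_sum fun i (_ : i ∈ Finset.range n) => hvar i
  have hevent : {ω | t ≤ |sampleMean n (fun i => W i ω) - m|}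
      = {ω | n * t ≤ |S ω - μ[S]|} := by
    ext ω
    have hrescale : sampleMean n (fun i => W i ω) - m = (n : ℝ)⁻¹ * (S ω - n * m) := by
      simp only [sampleMean, S, Finset.sum_apply]
      field_simp
    simp only [Set.mem_ofPred_eq, hSmean, hrescale, inv_mul_eq_div]
    rw [abs_div, Nat.abs_cast, le_div_iff₀ hnR, mul_comm t]
  rw [hevent]
  refine (meas_ge_le_variance_div_sq hS (by positivity)).trans (ENNReal.ofReal_le_ofReal ?_)
  calc variance S μ / (n * t) ^ 2 ≤ n * K / (n * t) ^ 2 := by gcongr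
    _ = K / (n * t ^ 2) := by field_simp

theorem measure_le_abs_sampleMean_comp_sub_le [IsProbabilityMeasure μ] {E : Type*}
    [MeasurableSpace E] {Θ : ℕ → Ω → E} (hΘ : ∀ i, Measurable (Θ i))
    (hindep : Pairwise fun i j => IndepFun (Θ i) (Θ j) μ)
    {Ω' : Type*} [MeasurableSpace Ω'] {ν : Measure Ω'} {ξ : Ω' → E}
    (hident : ∀ i, IdentDistrib (Θ i) ξ μ ν) {g : E → ℝ} (hg : Measurable g)
    (hg_bdd : ∀ z, |g z| ≤ 1) {m : ℝ} (hm : ∫ ω', g (ξ ω') ∂ν = m) {n : ℕ} (hn : 0 < n)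
    {t : ℝ} (ht : 0 < t) :
    μ {ω | t ≤ |sampleMean n (fun i => g (Θ i ω)) - m|}
      ≤ ENNReal.ofReal (1 / (n * t ^ 2)) := by
  have hmeas : ∀ i, Measurable fun ω => g (Θ i ω) := fun i => hg.comp (hΘ i)
  refine measure_le_abs_sampleMean_sub_le (W := fun i ω => g (Θ i ω))
    (fun i => MemLp.of_bound (hmeas i).aestronglyMeasurable 1 <|
      ae_of_all _ fun _ => hg_bdd _)
    (fun i j hij => (hindep hij).comp hg hg)
    (fun i => ((hident i).comp hg).integral_eq.trans hm) (fun i => ?_) hn ht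
  simpa [one_add_one_eq_two] using variance_le_sq_of_bounded (a := -1) (b := 1)
    (ae_of_all μ fun ω => abs_le.mp (hg_bdd (Θ i ω))) (hmeas i).aemeasurable

end Chebyshev

theorem tendsto_ofReal_div_sqrt_atTop_zero (c : ℝ) :
    Tendsto (fun n : ℕ => ENNReal.ofReal (c / √(n : ℝ))) atTop (𝓝 0) := by
  rw [← ENNReal.ofReal_zero]
  exact ENNReal.tendsto_ofReal <| tendsto_const_nhds.div_atTop <|
    tendsto_sqrt_atTop.comp tendsto_natCast_atTop_atTop

namespace MeasureTheory

variable {α ι E : Type*} {m : MeasurableSpace α} {μ : Measure α}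

theorem TendstoInMeasure.sub_s4 [SeminormedAddCommGroup E] {l : Filter ι} {f f' : ι → α → E}
    {g g' : α → E} (hf : TendstoInMeasure μ f l g) (hf' : TendstoInMeasure μ f' l g') :
    TendstoInMeasure μ (fun i x => f i x - f' i x) l (fun x => g x - g' x) := by
  rw [tendstoInMeasure_iff_norm] at hf hf' ⊢
  intro ε hε
  have hsplit : ∀ i, {x | ε ≤ ‖f i x - f' i x - (g x - g' x)‖}
      ⊆ {x | ε / 2 ≤ ‖f i x - g x‖} ∪ {x | ε / 2 ≤ ‖f' i x - g' x‖} := by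
    intro i x hx
    by_contra! h
    simp only [Set.mem_union, Set.mem_ofPred_eq, not_or, not_le] at h hx
    have := norm_sub_le (f i x - g x) (f' i x - g' x)
    rw [sub_sub_sub_comm] at this
    linarith [h.1, h.2]
  have hlim := (hf (ε / 2) (half_pos hε)).add (hf' (ε / 2) (half_pos hε))
  rw [add_zero] at hlim
  exact tendsto_of_tendsto_of_tendsto_of_le_of_le tendsto_const_nhds hlim (fun _ => zero_le)
    fun i => (measure_mono (hsplit i)).trans (measure_union_le _ _)

theorem tendstoInMeasure_sqrt_mul_mul_zero {X Y : ℕ → α → ℝ} {K L : ℝ}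
    (hX : ∀ n : ℕ, 0 < n → ∀ t, 0 < t →
      μ {x | t ≤ |X n x|} ≤ ENNReal.ofReal (K / (n * t ^ 2)))
    (hY : ∀ n : ℕ, 0 < n → ∀ t, 0 < t →
      μ {x | t ≤ |Y n x|} ≤ ENNReal.ofReal (L / (n * t ^ 2))) :
    TendstoInMeasure μ (fun (n : ℕ) x => √(n : ℝ) * (X n x * Y n x)) atTop (fun _ => 0) := by
  rw [tendstoInMeasure_iff_dist]
  intro ε hε
  have hbound : ∀ n : ℕ, 0 < n → μ {x | ε ≤ dist (√(n : ℝ) * (X n x * Y n x)) 0}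
      ≤ ENNReal.ofReal (K / √(n : ℝ)) + ENNReal.ofReal (L / ε ^ 2 / √(n : ℝ)) := by
    intro n hn
    -- split the deviation at the scale `s = n ^ (1/4)` for both factors
    set s := √√(n : ℝ)
    have hn' : (0 : ℝ) < √(n : ℝ) := sqrt_pos.mpr (Nat.cast_pos.mpr hn)
    have hs : 0 < s := sqrt_pos.mpr hn'
    have hs2 : s ^ 2 = √(n : ℝ) := sq_sqrt hn'.le
    have hn4 : (n : ℝ) = s ^ 2 * s ^ 2 := by rw [hs2, mul_self_sqrt (Nat.cast_nonneg n)]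
    have hsub : {x | ε ≤ dist (√(n : ℝ) * (X n x * Y n x)) 0}
        ⊆ {x | 1 / s ≤ |X n x|} ∪ {x | ε / s ≤ |Y n x|} := by
      intro x hx
      by_contra! h
      simp only [Set.mem_union, Set.mem_ofPred_eq, not_or, not_le] at h hx
      rw [dist_zero_right, norm_mul, norm_mul, Real.norm_eq_abs, Real.norm_eq_abs,
        Real.norm_eq_abs, abs_of_pos hn', ← hs2] at hx
      have hlt : s ^ 2 * (|X n x| * |Y n x|) < s ^ 2 * (1 / s * (ε / s)) := by
        gcongr
        exacts [h.1, h.2]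
      field_simp at hlt
      linarith
    refine (measure_mono hsub).trans <| (measure_union_le _ _).trans (add_le_add ?_ ?_)
    · refine (hX n hn _ (by positivity)).trans_eq ?_
      rw [← hs2, hn4]
      field_simp
    · refine (hY n hn _ (by positivity)).trans_eq ?_
      rw [← hs2, hn4]
      field_simp
  have hlim := (tendsto_ofReal_div_sqrt_atTop_zero K).add
    (tendsto_ofReal_div_sqrt_atTop_zero (L / ε ^ 2))
  rw [add_zero] at hlim
  exact tendsto_of_tendsto_of_tendsto_of_le_of_le' tendsto_const_nhds hlim
    (Eventually.of_forall fun _ => zero_le)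
    ((eventually_gt_atTop 0).mono hbound)

end MeasureTheory

theorem sqrt_mul_Dc_one_neg_one_sub (n : ℕ) (a b : ℕ → ℝ) (p q : ℝ) :
    √(n : ℝ) * Dc 1 (-1) n a b
      - (√(n : ℝ))⁻¹ * ∑ i ∈ Finset.range n,
          (cos (a i - b i) - p * q - q * (cos (a i) - p) - p * (cos (b i) - q))
    = √(n : ℝ) * (sampleMean n (fun i => sin (a i)) * sampleMean n (fun i => sin (-b i)))
      - √(n : ℝ) * ((sampleMean n (fun i => cos (a i)) - p)
          * (sampleMean n (fun i => cos (b i)) - q)) := by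
  rcases Nat.eq_zero_or_pos n with rfl | hn
  · simp
  have hn' : (0 : ℝ) < √(n : ℝ) := sqrt_pos.mpr (Nat.cast_pos.mpr hn)
  have hsqrt_inv : (√(n : ℝ))⁻¹ = √(n : ℝ) * (n : ℝ)⁻¹ := by
    rw [← inv_mul_cancel_right₀ hn'.ne' (√(n : ℝ))⁻¹, ← mul_inv,
      mul_self_sqrt (Nat.cast_nonneg n), mul_comm]
  simp only [Dc, sampleMean, one_mul, neg_one_mul, ← sub_eq_add_neg, cos_neg, sin_neg,
    Finset.sum_neg_distrib, Finset.sum_sub_distrib, ← Finset.mul_sum, Finset.sum_const,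
    Finset.card_range, nsmul_eq_mul, hsqrt_inv]
  field_simp
  ring

theorem Dc_asymptotically_equals_efficient_central_sequence_general
    {Ω : Type*} [MeasurableSpace Ω] (μ : Measure Ω) [IsProbabilityMeasure μ]
    (θ1 θ2 : Ω → ℝ)
    (hsym1 : ∀ z : ℤ, (∫ ω, Real.sin ((z : ℝ) * θ1 ω) ∂μ) = 0)
    (hsym2 : ∀ z : ℤ, (∫ ω, Real.sin ((z : ℝ) * θ2 ω) ∂μ) = 0)
    (Θ : ℕ → Ω → ℝ × ℝ) (hΘmeas : ∀ i, Measurable (Θ i))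
    (hiid : iIndepFun Θ μ)
    (hident : ∀ i, IdentDistrib (Θ i) (fun ω => (θ1 ω, θ2 ω)) μ μ) :
    TendstoInMeasure μ
      (fun (n : ℕ) ω =>
        Real.sqrt n * Dc 1 (-1) n (fun i => (Θ i ω).1) (fun i => (Θ i ω).2)
          - (Real.sqrt n)⁻¹ * ∑ i ∈ Finset.range n,
              (Real.cos ((Θ i ω).1 - (Θ i ω).2)
                - (∫ ω', Real.cos (θ1 ω') ∂μ) * (∫ ω', Real.cos (θ2 ω') ∂μ)
                - (∫ ω', Real.cos (θ2 ω') ∂μ)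
                    * (Real.cos ((Θ i ω).1) - ∫ ω', Real.cos (θ1 ω') ∂μ)
                - (∫ ω', Real.cos (θ1 ω') ∂μ)
                    * (Real.cos ((Θ i ω).2) - ∫ ω', Real.cos (θ2 ω') ∂μ)))
      atTop (fun _ => (0 : ℝ)) := by
  have hpair : Pairwise fun i j => IndepFun (Θ i) (Θ j) μ := fun i j hij => hiid.indepFun hij
  have hmean {g : ℝ × ℝ → ℝ} (hg : Measurable g) (hg_bdd : ∀ z, |g z| ≤ 1) {m : ℝ}
      (hm : ∫ ω, g (θ1 ω, θ2 ω) ∂μ = m) (n : ℕ) (hn : 0 < n) (t : ℝ) (ht : 0 < t) :=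
    measure_le_abs_sampleMean_comp_sub_le hΘmeas hpair hident hg hg_bdd hm hn ht
  have hsin := tendstoInMeasure_sqrt_mul_mul_zero
    (hmean (g := fun z => sin z.1) (by fun_prop) (fun z => abs_sin_le_one _)
      (by simpa using hsym1 1))
    (hmean (g := fun z => sin (-z.2)) (by fun_prop) (fun z => abs_sin_le_one _)
      (by simpa using hsym2 (-1)))
  have hcos := tendstoInMeasure_sqrt_mul_mul_zero
    (hmean (g := fun z => cos z.1) (by fun_prop) (fun z => abs_cos_le_one _) rfl)
    (hmean (g := fun z => cos z.2) (by fun_prop) (fun z => abs_cos_le_one _) rfl)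
  convert hsin.sub_s4 hcos using 1
  · funext n ω
    simp only [sub_zero]
    exact sqrt_mul_Dc_one_neg_one_sub n _ _ _ _
  · simp

/-- Under independence and reflectively symmetric marginals (all integer sine moments
vanish), `√n · D_c^{(n)}(1,−1)` is asymptotically equivalent, in probability, to the
efficient central sequence `Δ_eff^{(n)}`. -/
theorem Dc_asymptotically_equals_efficient_central_sequence
    {Ω : Type*} [MeasurableSpace Ω] (μ : Measure Ω) [IsProbabilityMeasure μ]
    (θ1 θ2 : Ω → ℝ) (hθ1 : Measurable θ1) (hθ2 : Measurable θ2)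
    (hindep : IndepFun θ1 θ2 μ)
    (hsym1 : ∀ z : ℤ, (∫ ω, Real.sin ((z : ℝ) * θ1 ω) ∂μ) = 0)
    (hsym2 : ∀ z : ℤ, (∫ ω, Real.sin ((z : ℝ) * θ2 ω) ∂μ) = 0)
    (Θ : ℕ → Ω → ℝ × ℝ) (hΘmeas : ∀ i, Measurable (Θ i))
    (hiid : iIndepFun Θ μ)
    (hident : ∀ i, IdentDistrib (Θ i) (fun ω => (θ1 ω, θ2 ω)) μ μ) :
    TendstoInMeasure μ
      (fun (n : ℕ) ω =>
        Real.sqrt n * Dc 1 (-1) n (fun i => (Θ i ω).1) (fun i => (Θ i ω).2)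
          - (Real.sqrt n)⁻¹ * ∑ i ∈ Finset.range n,
              (Real.cos ((Θ i ω).1 - (Θ i ω).2)
                - (∫ ω', Real.cos (θ1 ω') ∂μ) * (∫ ω', Real.cos (θ2 ω') ∂μ)
                - (∫ ω', Real.cos (θ2 ω') ∂μ)
                    * (Real.cos ((Θ i ω).1) - ∫ ω', Real.cos (θ1 ω') ∂μ)
                - (∫ ω', Real.cos (θ1 ω') ∂μ)
                    * (Real.cos ((Θ i ω).2) - ∫ ω', Real.cos (θ2 ω') ∂μ)))
      atTop (fun _ => (0 : ℝ)) :=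
  Dc_asymptotically_equals_efficient_central_sequence_general μ θ1 θ2 hsym1 hsym2 Θ hΘmeas hiid
    hident
end

section
/- Let (θ¹ᵢ, θ²ᵢ), i = 1,…,n, be i.i.d. with density f_{(κ₁,κ₂,0)}, i.e. independent von Mises marginals (κ₃ = 0). Let k_n = (k₁ⁿ, k₂ⁿ, k₃ⁿ)' be a bounded sequence in ℝ³ such that κ₁ + n^{−1/2}k₁ⁿ ≥ 0 and κ₂ + n^{−1/2}k₂ⁿ ≥ 0. Define the log-likelihood ratio Λ^{(n)} := Σ_{i=1}^{n} log( f_{(κ₁+n^{−1/2}k₁ⁿ, κ₂+n^{−1/2}k₂ⁿ, n^{−1/2}k₃ⁿ)}(θ¹ᵢ, θ²ᵢ) / f_{(κ₁,κ₂,0)}(θ¹ᵢ, θ²ᵢ) ). Then Λ^{(n)} = k_n' Δ^{(n)} − (1/2) k_n' Γ k_n + o_P(1) as n → ∞, where Δ^{(n)} = (Δ₁^{(n)}, Δ₂^{(n)}, Δ₃^{(n)})' with Δ₁^{(n)} = n^{−1/2} Σᵢ (cos(θ¹ᵢ) − J_{1c}(1)), Δ₂^{(n)} = n^{−1/2} Σᵢ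 (cos(θ²ᵢ) − J_{2c}(1)), Δ₃^{(n)} = n^{−1/2} Σᵢ (cos(θ¹ᵢ − θ²ᵢ) − J_{1c}(1)J_{2c}(1)), and Γ is the symmetric 3×3 matrix with diagonal entries Var[cos(θ¹)], Var[cos(θ²)], Var[cos(θ¹ − θ²)], entry (1,2) equal to 0, entry (1,3) equal to J_{2c}(1)·Var[cos(θ¹)], and entry (2,3) equal to J_{1c}(1)·Var[cos(θ²)]; here J_{1c}(1) = E[cos(θ¹)], J_{2c}(1) = E[cos(θ²)], and all expectations are under the null density f_{(κ₁,κ₂,0)}. -/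
open MeasureTheory ProbabilityTheory Filter Real
open scoped NNReal BigOperators Topology

/-- The density of the bivariate cosine von Mises model with positive interaction on
`𝕋² = [−π,π)²`, with parameters `κ₁, κ₂, κ₃`. -/
noncomputable def bcvmDensity (κ1 κ2 κ3 : ℝ) (p : ℝ × ℝ) : ℝ :=
  (∫ q in (Set.Ico (-Real.pi) Real.pi ×ˢ Set.Ico (-Real.pi) Real.pi),
      Real.exp (κ1 * Real.cos q.1 + κ2 * Real.cos q.2 + κ3 * Real.cos (q.1 - q.2)))⁻¹
    * Real.exp (κ1 * Real.cos p.1 + κ2 * Real.cos p.2 + κ3 * Real.cos (p.1 - p.2))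

/-- The central sequence `Δ^{(n)} = (Δ₁^{(n)}, Δ₂^{(n)}, Δ₃^{(n)})'`, with expectations taken
with respect to the (common) law of the observations. -/
noncomputable def centralSeq {Ω : Type*} [MeasurableSpace Ω] (μ : Measure Ω)
    (Θ : ℕ → Ω → ℝ × ℝ) (n : ℕ) (ω : Ω) : Fin 3 → ℝ :=
  ![(Real.sqrt n)⁻¹ * ∑ i ∈ Finset.range n,
      (Real.cos (Θ i ω).1 - ∫ ω', Real.cos (Θ 0 ω').1 ∂μ),
    (Real.sqrt n)⁻¹ * ∑ i ∈ Finset.range n,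
      (Real.cos (Θ i ω).2 - ∫ ω', Real.cos (Θ 0 ω').2 ∂μ),
    (Real.sqrt n)⁻¹ * ∑ i ∈ Finset.range n,
      (Real.cos ((Θ i ω).1 - (Θ i ω).2)
        - (∫ ω', Real.cos (Θ 0 ω').1 ∂μ) * ∫ ω', Real.cos (Θ 0 ω').2 ∂μ)]

/-- The Fisher-information-type matrix `Γ` of the LAN expansion, with moments taken with
respect to the law of `Θ0`. -/
noncomputable def GammaLAN {Ω : Type*} [MeasurableSpace Ω] (μ : Measure Ω)
    (Θ0 : Ω → ℝ × ℝ) : Matrix (Fin 3) (Fin 3) ℝ :=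
  !![∫ ω, (Real.cos (Θ0 ω).1 - ∫ ω', Real.cos (Θ0 ω').1 ∂μ) ^ 2 ∂μ,
      0,
      (∫ ω', Real.cos (Θ0 ω').2 ∂μ)
        * ∫ ω, (Real.cos (Θ0 ω).1 - ∫ ω', Real.cos (Θ0 ω').1 ∂μ) ^ 2 ∂μ;
    0,
      ∫ ω, (Real.cos (Θ0 ω).2 - ∫ ω', Real.cos (Θ0 ω').2 ∂μ) ^ 2 ∂μ,
      (∫ ω', Real.cos (Θ0 ω').1 ∂μ)
        * ∫ ω, (Real.cos (Θ0 ω).2 - ∫ ω', Real.cos (Θ0 ω').2 ∂μ) ^ 2 ∂μ;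
    (∫ ω', Real.cos (Θ0 ω').2 ∂μ)
        * ∫ ω, (Real.cos (Θ0 ω).1 - ∫ ω', Real.cos (Θ0 ω').1 ∂μ) ^ 2 ∂μ,
      (∫ ω', Real.cos (Θ0 ω').1 ∂μ)
        * ∫ ω, (Real.cos (Θ0 ω).2 - ∫ ω', Real.cos (Θ0 ω').2 ∂μ) ^ 2 ∂μ,
      ∫ ω, (Real.cos ((Θ0 ω).1 - (Θ0 ω).2)
          - ∫ ω', Real.cos ((Θ0 ω').1 - (Θ0 ω').2) ∂μ) ^ 2 ∂μ]


/-!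
The model is an exponential family in the statistic `T(θ) = (cos θ¹, cos θ², cos (θ¹ - θ²))`:
`log (f_{κ + t k} / f_κ) = t k ⬝ T - K_k(t)`, where `K_k` is the cumulant generating function of
`k ⬝ T` under `f_κ`. Under the null the two angles are independent von Mises variables with
`E[sin θ¹] = E[sin θ²] = 0` by symmetry. Hence `E[cos (θ¹ - θ²)] = J_{1c}(1) J_{2c}(1)`, so that
`Δ^{(n)}` is centred at `E[T]` and, with `t = n^{-1/2}`, the random parts of `Λ^{(n)}` and
`kₙ'Δ^{(n)}` cancel exactly; and `Γ` is the covariance matrix of `T`, so `kₙ'Γkₙ = Var[kₙ ⬝ T]`.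
What is left is `-n` times the second-order Taylor remainder of `K_{kₙ}` at `t`, which is
`O(n^{-1/2})` uniformly in `ω` because `kₙ ⬝ T` is bounded.
-/

open scoped ENNReal

lemma abs_exp_sub_taylor_two_le {x : ℝ} (hx : |x| ≤ 1) :
    |exp x - (1 + x + x ^ 2 / 2)| ≤ |x| ^ 3 := by
  have h := Real.exp_bound hx (n := 3) (by norm_num)
  norm_num [Finset.sum_range_succ, Nat.factorial] at h
  have : 0 ≤ |x| ^ 3 := by positivity
  linarith

lemma abs_log_one_add_sub_taylor_two_le {x : ℝ} (hx : |x| ≤ 1 / 2) :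
    |log (1 + x) - (x - x ^ 2 / 2)| ≤ 2 * |x| ^ 3 := by
  have h := Real.abs_log_sub_add_sum_range_le (x := -x) (by rw [abs_neg]; linarith) 2
  norm_num [Finset.sum_range_succ, abs_neg] at h
  calc |log (1 + x) - (x - x ^ 2 / 2)| = |-x + x ^ 2 / 2 + log (1 + x)| := by ring_nf
    _ ≤ |x| ^ 3 / (1 - |x|) := h
    _ ≤ 2 * |x| ^ 3 := by
        rw [div_le_iff₀ (by linarith)]
        nlinarith [pow_nonneg (abs_nonneg x) 3]

lemma abs_log_one_add_sub_cumulant_le {a b r δ : ℝ} (hδ : 0 ≤ δ) (hδ6 : δ ≤ 1 / 6)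
    (ha : |a| ≤ δ) (hb : |b| ≤ δ ^ 2) (hr : |r| ≤ δ ^ 3) :
    |log (1 + (a + b / 2 + r)) - a - (b - a ^ 2) / 2| ≤ 60 * δ ^ 3 := by
  set x := a + b / 2 + r
  have hx : |x| ≤ 3 * δ := by
    calc |x| ≤ |a| + |b / 2| + |r| := abs_add_three _ _ _
      _ ≤ δ + δ ^ 2 / 2 + δ ^ 3 := by rw [abs_div, abs_two]; gcongr
      _ ≤ 3 * δ := by nlinarith
  have hs := abs_log_one_add_sub_taylor_two_le (x := x) (by linarith)
  have hxa : |x - a| ≤ δ ^ 3 + δ ^ 2 / 2 := by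
    calc |x - a| = |r + b / 2| := by congr 1; simp only [x]; ring
      _ ≤ |r| + |b / 2| := abs_add_le _ _
      _ ≤ δ ^ 3 + δ ^ 2 / 2 := by rw [abs_div, abs_two]; gcongr
  have hxa' : |x + a| ≤ 4 * δ := (abs_add_le _ _).trans (by linarith)
  calc |log (1 + x) - a - (b - a ^ 2) / 2|
      = |(log (1 + x) - (x - x ^ 2 / 2)) + r - (x - a) * (x + a) / 2| := by
        congr 1; simp only [x]; ring
    _ ≤ |log (1 + x) - (x - x ^ 2 / 2)| + |r| + |x - a| * |x + a| / 2 := by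
        rw [← abs_mul, ← abs_two, ← abs_div, abs_two]
        exact (abs_sub _ _).trans (add_le_add_left (abs_add_le _ _) _)
    _ ≤ 2 * (3 * δ) ^ 3 + δ ^ 3 + (δ ^ 3 + δ ^ 2 / 2) * (4 * δ) / 2 := by
        gcongr
        exact hs.trans (by gcongr)
    _ ≤ 60 * δ ^ 3 := by nlinarith [pow_nonneg hδ 3, pow_nonneg hδ 4]

section Cumulant

variable {Ω : Type*} [MeasurableSpace Ω] {μ : Measure Ω} [IsProbabilityMeasure μ]

lemma abs_integral_le_of_abs_le {f : Ω → ℝ} {C : ℝ} (hf : ∀ᵐ ω ∂μ, |f ω| ≤ C) :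
    |∫ ω, f ω ∂μ| ≤ C := by
  simpa using norm_integral_le_of_norm_le_const (μ := μ) (f := f) (C := C)
    (by simpa only [Real.norm_eq_abs] using hf)

lemma abs_integral_exp_sub_taylor_two_le {U : Ω → ℝ} (hU : AEStronglyMeasurable U μ) {δ : ℝ}
    (hUδ : ∀ᵐ ω ∂μ, |U ω| ≤ δ) (hδ : δ ≤ 1) :
    |∫ ω, exp (U ω) ∂μ - (1 + ∫ ω, U ω ∂μ + (∫ ω, U ω ^ 2 ∂μ) / 2)| ≤ δ ^ 3 := by
  have hUL2 : MemLp U 2 μ := MemLp.of_bound hU δ (by simpa using hUδ)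
  have h1 : Integrable (fun ω => 1 + U ω) μ :=
    (integrable_const 1).add (hUL2.integrable one_le_two)
  have h2 : Integrable (fun ω => 1 + U ω + U ω ^ 2 / 2) μ :=
    h1.add (hUL2.integrable_sq.div_const 2)
  have hexp : Integrable (fun ω => exp (U ω)) μ :=
    Integrable.of_bound (Real.continuous_exp.comp_aestronglyMeasurable hU) (exp δ)
      (hUδ.mono fun ω h => by
        rw [Real.norm_eq_abs, abs_exp]; exact exp_le_exp.2 ((le_abs_self _).trans h))
  convert abs_integral_le_of_abs_le (hUδ.mono fun ω h =>
    (abs_exp_sub_taylor_two_le (h.trans hδ)).trans (pow_le_pow_left₀ (abs_nonneg _) h 3))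
    using 2
  rw [integral_sub hexp h2, integral_add h1 (hUL2.integrable_sq.div_const 2),
    integral_add (integrable_const 1) (hUL2.integrable one_le_two), integral_div]
  simp

theorem abs_cgf_sub_taylor_two_le {X : Ω → ℝ} (hX : AEStronglyMeasurable X μ) {σ t : ℝ}
    (hXσ : ∀ᵐ ω ∂μ, |X ω| ≤ σ) (htσ : |t| * σ ≤ 1 / 6) :
    |cgf X μ t - t * μ[X] - t ^ 2 / 2 * Var[X; μ]| ≤ 60 * (|t| * σ) ^ 3 := by
  obtain ⟨ω₀, hω₀⟩ := hXσ.exists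
  have hδ : 0 ≤ |t| * σ := mul_nonneg (abs_nonneg t) ((abs_nonneg _).trans hω₀)
  have hU : ∀ᵐ ω ∂μ, |t * X ω| ≤ |t| * σ := hXσ.mono fun ω h => by
    rw [abs_mul]; gcongr
  have hUm : AEStronglyMeasurable (fun ω => t * X ω) μ := hX.const_mul t
  have hvar : t ^ 2 / 2 * Var[X; μ]
      = ((∫ ω, (t * X ω) ^ 2 ∂μ) - (∫ ω, t * X ω ∂μ) ^ 2) / 2 := by
    rw [mul_comm, mul_div_assoc', mul_comm, ← variance_const_mul,
      variance_eq_sub (MemLp.of_bound hUm _ (by simpa using hU))]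
    rfl
  have hmean : t * μ[X] = ∫ ω, t * X ω ∂μ := (integral_const_mul t X).symm
  have hr := abs_integral_exp_sub_taylor_two_le hUm hU (by linarith)
  rw [hvar, hmean, cgf, mgf,
    show ∫ ω, exp (t * X ω) ∂μ = 1 + (∫ ω, t * X ω ∂μ + (∫ ω, (t * X ω) ^ 2 ∂μ) / 2
      + (∫ ω, exp (t * X ω) ∂μ
        - (1 + ∫ ω, t * X ω ∂μ + (∫ ω, (t * X ω) ^ 2 ∂μ) / 2))) by ring]
  exact abs_log_one_add_sub_cumulant_le hδ htσ (abs_integral_le_of_abs_le hU)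
    (abs_integral_le_of_abs_le (hU.mono fun ω h => by rw [abs_pow]; gcongr)) hr

end Cumulant

lemma tendstoInMeasure_zero_of_abs_le {α ι : Type*} [MeasurableSpace α] {μ : Measure α}
    {l : Filter ι} {f : ι → α → ℝ} {b : ι → ℝ} (hb : Tendsto b l (𝓝 0))
    (hfb : ∀ᶠ i in l, ∀ x, |f i x| ≤ b i) : TendstoInMeasure μ f l 0 := by
  rw [tendstoInMeasure_iff_dist]
  intro ε hε
  refine tendsto_const_nhds.congr' ?_
  filter_upwards [hfb, hb.eventually (gt_mem_nhds hε)] with i hfi hbi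
  rw [eq_comm, measure_eq_zero_iff_ae_notMem]
  refine ae_of_all _ fun x hx => ?_
  simp only [Set.mem_ofPred_eq, Pi.zero_apply, Real.dist_eq, sub_zero] at hx
  linarith [hfi x]

lemma Measure.prod_tilted {α β : Type*} [MeasurableSpace α] [MeasurableSpace β]
    {μ : Measure α} {ν : Measure β} [SFinite μ] [SFinite ν] {f : α → ℝ} {g : β → ℝ}
    (hf : Measurable f) (hg : Measurable g) :
    (μ.tilted f).prod (ν.tilted g) = (μ.prod ν).tilted (fun p => f p.1 + g p.2) := by
  simp only [Measure.tilted]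
  rw [prod_withDensity (by fun_prop) (by fun_prop)]
  congr 1
  funext p
  rw [← ENNReal.ofReal_mul (by positivity)]
  simp_rw [exp_add]
  rw [integral_prod_mul (fun x => exp (f x)) (fun y => exp (g y))]
  congr 1
  ring

lemma intervalIntegral_eq_zero_of_odd {f : ℝ → ℝ} (hf : ∀ x, f (-x) = -f x) (a : ℝ) :
    ∫ x in -a..a, f x = 0 := by
  have h := intervalIntegral.integral_comp_neg (a := -a) (b := a) f
  simp only [neg_neg, hf, intervalIntegral.integral_neg] at h
  linarith

noncomputable def vonMisesMeasure (κ : ℝ) : Measure ℝ :=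
  (volume.restrict (Set.Ico (-π) π)).tilted (fun x => κ * cos x)

instance : NeZero (volume.restrict (Set.Ico (-π) π)) :=
  ⟨by simp [Measure.restrict_eq_zero, Real.pi_pos]⟩

instance (κ : ℝ) : IsProbabilityMeasure (vonMisesMeasure κ) :=
  isProbabilityMeasure_tilted
    ((by fun_prop : Continuous fun x => exp (κ * cos x)).integrableOn_Icc.mono_set
      Set.Ico_subset_Icc_self)

lemma integral_sin_vonMisesMeasure (κ : ℝ) : ∫ x, sin x ∂(vonMisesMeasure κ) = 0 := by
  rw [vonMisesMeasure, integral_tilted, integral_Ico_eq_integral_Ioc,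
    ← intervalIntegral.integral_of_le (by linarith [pi_pos])]
  exact intervalIntegral_eq_zero_of_odd (fun x => by simp [sin_neg, cos_neg]) π

noncomputable def bcvmStat (p : ℝ × ℝ) : Fin 3 → ℝ := ![cos p.1, cos p.2, cos (p.1 - p.2)]

lemma abs_bcvmStat_le_one (p : ℝ × ℝ) (j : Fin 3) : |bcvmStat p j| ≤ 1 := by
  fin_cases j <;> simp [bcvmStat, abs_cos_le_one]

@[fun_prop]
lemma continuous_bcvmStat_apply (j : Fin 3) : Continuous fun p => bcvmStat p j := by
  fin_cases j <;> simp only [bcvmStat] <;> fun_prop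

noncomputable def bcvmMeasure (κ1 κ2 κ3 : ℝ) : Measure (ℝ × ℝ) :=
  (volume.restrict (Set.Ico (-π) π ×ˢ Set.Ico (-π) π)).withDensity
    (fun p => ENNReal.ofReal (bcvmDensity κ1 κ2 κ3 p))

lemma bcvmMeasure_eq_tilted (κ1 κ2 κ3 : ℝ) :
    bcvmMeasure κ1 κ2 κ3 = (volume.restrict (Set.Ico (-π) π ×ˢ Set.Ico (-π) π)).tilted
      (fun p => κ1 * cos p.1 + κ2 * cos p.2 + κ3 * cos (p.1 - p.2)) := by
  simp only [bcvmMeasure, bcvmDensity, Measure.tilted, div_eq_inv_mul]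

lemma volume_restrict_Ico_prod_Ico :
    volume.restrict (Set.Ico (-π) π ×ˢ Set.Ico (-π) π)
      = (volume.restrict (Set.Ico (-π) π)).prod (volume.restrict (Set.Ico (-π) π)) := by
  rw [Measure.volume_eq_prod, Measure.prod_restrict]

instance : NeZero (volume.restrict (Set.Ico (-π) π ×ˢ Set.Ico (-π) π)) :=
  ⟨by simp [Measure.restrict_eq_zero, Measure.volume_eq_prod, Measure.prod_prod, pi_pos]⟩

lemma integrable_exp_bcvm (κ1 κ2 κ3 : ℝ) :
    Integrable (fun p : ℝ × ℝ => exp (κ1 * cos p.1 + κ2 * cos p.2 + κ3 * cos (p.1 - p.2)))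
      (volume.restrict (Set.Ico (-π) π ×ˢ Set.Ico (-π) π)) :=
  ((by fun_prop : Continuous fun p : ℝ × ℝ =>
      exp (κ1 * cos p.1 + κ2 * cos p.2 + κ3 * cos (p.1 - p.2))).continuousOn.integrableOn_compact
    (isCompact_Icc.prod isCompact_Icc)).mono_set
    (Set.prod_mono Set.Ico_subset_Icc_self Set.Ico_subset_Icc_self)

lemma mgf_sum_mul_bcvmStat (κ1 κ2 κ3 t : ℝ) (h : Fin 3 → ℝ) :
    mgf (fun p => ∑ j, h j * bcvmStat p j) (bcvmMeasure κ1 κ2 κ3) t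
      = (∫ q in Set.Ico (-π) π ×ˢ Set.Ico (-π) π, exp ((κ1 + t * h 0) * cos q.1
            + (κ2 + t * h 1) * cos q.2 + (κ3 + t * h 2) * cos (q.1 - q.2)))
        / ∫ q in Set.Ico (-π) π ×ˢ Set.Ico (-π) π,
            exp (κ1 * cos q.1 + κ2 * cos q.2 + κ3 * cos (q.1 - q.2)) := by
  rw [mgf, bcvmMeasure_eq_tilted, integral_exp_tilted]
  congr with q
  simp only [Pi.add_apply, Fin.sum_univ_three, bcvmStat, Matrix.cons_val_zero,
    Matrix.cons_val_one, Matrix.cons_val_two, Matrix.head_cons, Matrix.tail_cons]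
  congr 1
  ring

lemma log_bcvmDensity_div (κ1 κ2 κ3 t : ℝ) (h : Fin 3 → ℝ) (p : ℝ × ℝ) :
    log (bcvmDensity (κ1 + t * h 0) (κ2 + t * h 1) (κ3 + t * h 2) p / bcvmDensity κ1 κ2 κ3 p)
      = t * ∑ j, h j * bcvmStat p j
        - cgf (fun q => ∑ j, h j * bcvmStat q j) (bcvmMeasure κ1 κ2 κ3) t := by
  have hZ := integral_exp_pos (integrable_exp_bcvm κ1 κ2 κ3)
  have hZ' := integral_exp_pos (integrable_exp_bcvm (κ1 + t * h 0) (κ2 + t * h 1) (κ3 + t * h 2))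
  have hratio : bcvmDensity (κ1 + t * h 0) (κ2 + t * h 1) (κ3 + t * h 2) p / bcvmDensity κ1 κ2 κ3 p
      = exp (t * ∑ j, h j * bcvmStat p j)
        / mgf (fun q => ∑ j, h j * bcvmStat q j) (bcvmMeasure κ1 κ2 κ3) t := by
    rw [mgf_sum_mul_bcvmStat, bcvmDensity, bcvmDensity]
    simp only [Fin.sum_univ_three, bcvmStat, Matrix.cons_val_zero, Matrix.cons_val_one,
      Matrix.cons_val_two, Matrix.head_cons, Matrix.tail_cons]
    rw [show (κ1 + t * h 0) * cos p.1 + (κ2 + t * h 1) * cos p.2 + (κ3 + t * h 2) * cos (p.1 - p.2)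
      = (κ1 * cos p.1 + κ2 * cos p.2 + κ3 * cos (p.1 - p.2))
        + t * (h 0 * cos p.1 + h 1 * cos p.2 + h 2 * cos (p.1 - p.2)) by ring, exp_add]
    field_simp
  have hmgf : 0 < mgf (fun q => ∑ j, h j * bcvmStat q j) (bcvmMeasure κ1 κ2 κ3) t := by
    rw [mgf_sum_mul_bcvmStat]; exact div_pos hZ' hZ
  rw [hratio, log_div (exp_ne_zero _) hmgf.ne', log_exp, cgf]

lemma bcvmMeasure_zero (κ1 κ2 : ℝ) :
    bcvmMeasure κ1 κ2 0 = (vonMisesMeasure κ1).prod (vonMisesMeasure κ2) := by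
  rw [bcvmMeasure_eq_tilted, volume_restrict_Ico_prod_Ico, vonMisesMeasure, vonMisesMeasure,
    Measure.prod_tilted (by fun_prop) (by fun_prop)]
  simp only [zero_mul, add_zero]

lemma covariance_self_eq_integral_sq {Ω : Type*} [MeasurableSpace Ω] {μ : Measure Ω}
    (f : Ω → ℝ) : cov[f, f; μ] = ∫ ω, (f ω - ∫ ω', f ω' ∂μ) ^ 2 ∂μ := by
  simp only [covariance, sq]

section Bounded

variable {Ω : Type*} [MeasurableSpace Ω] {μ : Measure Ω} [IsFiniteMeasure μ]

lemma memLp_of_abs_le_one {f : Ω → ℝ} (hf : AEMeasurable f μ) (h : ∀ ω, |f ω| ≤ 1)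
    (p : ℝ≥0∞) : MemLp f p μ :=
  MemLp.of_bound hf.aestronglyMeasurable 1 (ae_of_all _ h)

lemma integrable_of_abs_le_one {f : Ω → ℝ} (hf : AEMeasurable f μ) (h : ∀ ω, |f ω| ≤ 1) :
    Integrable f μ :=
  (memLp_of_abs_le_one hf h 1).integrable le_rfl

end Bounded

section IndependentAngles

variable {Ω : Type*} [MeasurableSpace Ω] {μ : Measure Ω} [IsProbabilityMeasure μ] {X Y : Ω → ℝ}

lemma integral_cos_sub_of_indepFun (hX : AEMeasurable X μ) (hY : AEMeasurable Y μ)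
    (hXY : IndepFun X Y μ) (hsin : ∫ ω, sin (Y ω) ∂μ = 0) :
    ∫ ω, cos (X ω - Y ω) ∂μ = (∫ ω, cos (X ω) ∂μ) * ∫ ω, cos (Y ω) ∂μ := by
  simp_rw [cos_sub]
  rw [integral_add (integrable_of_abs_le_one (by fun_prop) fun ω => by
      simp only [abs_mul]; bound [abs_cos_le_one])
    (integrable_of_abs_le_one (by fun_prop) fun ω => by
      simp only [abs_mul]; bound [abs_sin_le_one]),
    hXY.integral_fun_comp_mul_comp hX hY (by fun_prop) (by fun_prop),
    hXY.integral_fun_comp_mul_comp hX hY (by fun_prop) (by fun_prop), hsin, mul_zero, add_zero]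

lemma covariance_cos_left_cos_sub_of_indepFun (hX : AEMeasurable X μ) (hY : AEMeasurable Y μ)
    (hXY : IndepFun X Y μ) (hsin : ∫ ω, sin (Y ω) ∂μ = 0) :
    cov[fun ω => cos (X ω), fun ω => cos (X ω - Y ω); μ]
      = (∫ ω, cos (Y ω) ∂μ) * Var[fun ω => cos (X ω); μ] := by
  have hprod : ∫ ω, cos (X ω) * cos (X ω - Y ω) ∂μ
      = (∫ ω, cos (X ω) ^ 2 ∂μ) * ∫ ω, cos (Y ω) ∂μ := by
    have hsplit : ∀ ω, cos (X ω) * cos (X ω - Y ω)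
        = cos (X ω) ^ 2 * cos (Y ω) + cos (X ω) * sin (X ω) * sin (Y ω) := fun ω => by
      rw [cos_sub]; ring
    simp_rw [hsplit]
    rw [integral_add (integrable_of_abs_le_one (by fun_prop) fun ω => by
        simp only [abs_mul, abs_pow]; bound [abs_cos_le_one])
      (integrable_of_abs_le_one (by fun_prop) fun ω => by
        simp only [abs_mul]; bound [abs_cos_le_one, abs_sin_le_one]),
      hXY.integral_fun_comp_mul_comp (f := fun x => cos x ^ 2) hX hY (by fun_prop) (by fun_prop),
      hXY.integral_fun_comp_mul_comp (f := fun x => cos x * sin x) hX hY (by fun_prop)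
        (by fun_prop), hsin, mul_zero, add_zero]
  have hcos : ∀ p, MemLp (fun ω => cos (X ω)) p μ :=
    memLp_of_abs_le_one (by fun_prop) fun ω => abs_cos_le_one _
  rw [covariance_eq_sub (hcos 2) (memLp_of_abs_le_one (by fun_prop) (fun ω => abs_cos_le_one _) 2),
    variance_eq_sub (hcos 2), integral_cos_sub_of_indepFun hX hY hXY hsin]
  simp only [Pi.mul_apply, Pi.pow_apply, hprod]
  ring

lemma covariance_cos_right_cos_sub_of_indepFun (hX : AEMeasurable X μ) (hY : AEMeasurable Y μ)
    (hXY : IndepFun X Y μ) (hsin : ∫ ω, sin (X ω) ∂μ = 0) :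
    cov[fun ω => cos (Y ω), fun ω => cos (X ω - Y ω); μ]
      = (∫ ω, cos (X ω) ∂μ) * Var[fun ω => cos (Y ω); μ] := by
  simpa only [← cos_neg (X _ - Y _), neg_sub] using
    covariance_cos_left_cos_sub_of_indepFun hY hX hXY.symm hsin

lemma GammaLAN_eq_covariance {Θ0 : Ω → ℝ × ℝ} (hΘ : AEMeasurable Θ0 μ)
    (hind : IndepFun (fun ω => (Θ0 ω).1) (fun ω => (Θ0 ω).2) μ)
    (hsin1 : ∫ ω, sin (Θ0 ω).1 ∂μ = 0) (hsin2 : ∫ ω, sin (Θ0 ω).2 ∂μ = 0) (j l : Fin 3) :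
    GammaLAN μ Θ0 j l = cov[fun ω => bcvmStat (Θ0 ω) j, fun ω => bcvmStat (Θ0 ω) l; μ] := by
  have h1 : AEMeasurable (fun ω => (Θ0 ω).1) μ := by fun_prop
  have h2 : AEMeasurable (fun ω => (Θ0 ω).2) μ := by fun_prop
  have h12 : cov[fun ω => cos (Θ0 ω).1, fun ω => cos (Θ0 ω).2; μ] = 0 :=
    (hind.comp measurable_cos measurable_cos).covariance_eq_zero
      (memLp_of_abs_le_one (by fun_prop) (fun ω => abs_cos_le_one _) 2)
      (memLp_of_abs_le_one (by fun_prop) (fun ω => abs_cos_le_one _) 2)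
  have h13 := covariance_cos_left_cos_sub_of_indepFun h1 h2 hind hsin2
  have h23 := covariance_cos_right_cos_sub_of_indepFun h1 h2 hind hsin1
  rw [variance_eq_integral (by fun_prop)] at h13 h23
  fin_cases j <;> fin_cases l <;>
    simp only [GammaLAN, bcvmStat, covariance_self_eq_integral_sq, Fin.zero_eta, Fin.mk_one,
      Fin.reduceFinMk, Fin.isValue, Matrix.of_apply, Matrix.cons_val', Matrix.cons_val,
      Matrix.cons_val_zero, Matrix.cons_val_one, Matrix.cons_val_fin_one]
  all_goals first
    | exact h12.symm | exact h13.symm | exact h23.symm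
    | (rw [covariance_comm]; first | exact h12.symm | exact h13.symm | exact h23.symm)

lemma sum_mul_GammaLAN_mul_eq_variance {Θ0 : Ω → ℝ × ℝ} (hΘ : AEMeasurable Θ0 μ)
    (hind : IndepFun (fun ω => (Θ0 ω).1) (fun ω => (Θ0 ω).2) μ)
    (hsin1 : ∫ ω, sin (Θ0 ω).1 ∂μ = 0) (hsin2 : ∫ ω, sin (Θ0 ω).2 ∂μ = 0) (k : Fin 3 → ℝ) :
    ∑ j, ∑ l, k j * GammaLAN μ Θ0 j l * k l
      = Var[fun ω => ∑ j, k j * bcvmStat (Θ0 ω) j; μ] := by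
  have hT : ∀ j, MemLp (fun ω => bcvmStat (Θ0 ω) j) 2 μ := fun j =>
    memLp_of_abs_le_one (by fun_prop) (fun ω => abs_bcvmStat_le_one _ _) 2
  rw [variance_fun_sum fun j => (hT j).const_mul (k j)]
  simp_rw [covariance_const_mul_left, covariance_const_mul_right,
    GammaLAN_eq_covariance hΘ hind hsin1 hsin2]
  congr! 2 with j _ l _
  ring

end IndependentAngles

section NullLaw

variable {Ω : Type*} [MeasurableSpace Ω] {μ : Measure Ω} {κ1 κ2 : ℝ} {Z : Ω → ℝ × ℝ}

lemma indepFun_of_map_eq_bcvmMeasure_zero [IsProbabilityMeasure μ] (hZ : Measurable Z)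
    (h : μ.map Z = bcvmMeasure κ1 κ2 0) :
    IndepFun (fun ω => (Z ω).1) (fun ω => (Z ω).2) μ := by
  have hfst : μ.map (fun ω => (Z ω).1) = vonMisesMeasure κ1 := by
    rw [← Function.comp_def, ← Measure.map_map measurable_fst hZ, h, bcvmMeasure_zero,
      Measure.map_fst_prod, measure_univ, one_smul]
  have hsnd : μ.map (fun ω => (Z ω).2) = vonMisesMeasure κ2 := by
    rw [← Function.comp_def, ← Measure.map_map measurable_snd hZ, h, bcvmMeasure_zero,
      Measure.map_snd_prod, measure_univ, one_smul]
  rw [indepFun_iff_map_prod_eq_prod_map_map (by fun_prop) (by fun_prop), hfst, hsnd,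
    ← bcvmMeasure_zero, ← h]

lemma integral_sin_fst_of_map_eq_bcvmMeasure_zero (hZ : Measurable Z)
    (h : μ.map Z = bcvmMeasure κ1 κ2 0) : ∫ ω, sin (Z ω).1 ∂μ = 0 := by
  rw [show ∫ ω, sin (Z ω).1 ∂μ = ∫ p, sin p.1 ∂(μ.map Z) from
      (integral_map hZ.aemeasurable (continuous_sin.comp continuous_fst).aestronglyMeasurable).symm,
    h, bcvmMeasure_zero, integral_fun_fst, integral_sin_vonMisesMeasure, smul_zero]

lemma integral_sin_snd_of_map_eq_bcvmMeasure_zero (hZ : Measurable Z)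
    (h : μ.map Z = bcvmMeasure κ1 κ2 0) : ∫ ω, sin (Z ω).2 ∂μ = 0 := by
  rw [show ∫ ω, sin (Z ω).2 ∂μ = ∫ p, sin p.2 ∂(μ.map Z) from
      (integral_map hZ.aemeasurable (continuous_sin.comp continuous_snd).aestronglyMeasurable).symm,
    h, bcvmMeasure_zero, integral_fun_snd, integral_sin_vonMisesMeasure, smul_zero]

end NullLaw

section LocalAsymptoticNormality

variable {Ω : Type*} [MeasurableSpace Ω] {μ : Measure Ω} [IsProbabilityMeasure μ]

noncomputable def bcvmLogLikelihoodRatio (κ1 κ2 : ℝ) (Θ : ℕ → Ω → ℝ × ℝ) (n : ℕ)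
    (k : Fin 3 → ℝ) (ω : Ω) : ℝ :=
  ∑ i ∈ Finset.range n, log (bcvmDensity (κ1 + (√n)⁻¹ * k 0) (κ2 + (√n)⁻¹ * k 1)
    ((√n)⁻¹ * k 2) (Θ i ω) / bcvmDensity κ1 κ2 0 (Θ i ω))

lemma abs_sum_mul_bcvmStat_le {k : Fin 3 → ℝ} {M : ℝ} (hk : ∀ j, |k j| ≤ M) (p : ℝ × ℝ) :
    |∑ j, k j * bcvmStat p j| ≤ 3 * M := by
  calc |∑ j, k j * bcvmStat p j| ≤ ∑ j, |k j * bcvmStat p j| := Finset.abs_sum_le_sum_abs _ _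
    _ ≤ ∑ _j : Fin 3, M := Finset.sum_le_sum fun j _ => by
        rw [abs_mul]
        exact (mul_le_of_le_one_right (abs_nonneg _) (abs_bcvmStat_le_one p j)).trans (hk j)
    _ = 3 * M := by simp

lemma sum_mul_centralSeq {Θ : ℕ → Ω → ℝ × ℝ} (hΘ0 : AEMeasurable (Θ 0) μ)
    (hcos : ∫ ω, cos ((Θ 0 ω).1 - (Θ 0 ω).2) ∂μ
      = (∫ ω, cos (Θ 0 ω).1 ∂μ) * ∫ ω, cos (Θ 0 ω).2 ∂μ)
    (k : Fin 3 → ℝ) (n : ℕ) (ω : Ω) :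
    ∑ j, k j * centralSeq μ Θ n ω j
      = (√n)⁻¹ * (∑ i ∈ Finset.range n, ∑ j, k j * bcvmStat (Θ i ω) j
          - n * ∫ ω', ∑ j, k j * bcvmStat (Θ 0 ω') j ∂μ) := by
  have hT : ∀ j, Integrable (fun ω => bcvmStat (Θ 0 ω) j) μ := fun j =>
    integrable_of_abs_le_one (by fun_prop) (fun ω => abs_bcvmStat_le_one _ j)
  rw [integral_finsetSum _ fun j _ => (hT j).const_mul (k j)]
  simp_rw [integral_const_mul]
  simp only [Fin.sum_univ_three, centralSeq, bcvmStat, Matrix.cons_val_zero, Matrix.cons_val_one,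
    Matrix.cons_val_two, Matrix.head_cons, Matrix.tail_cons, hcos, Finset.sum_sub_distrib,
    Finset.sum_add_distrib, ← Finset.mul_sum, Finset.sum_const, Finset.card_range, nsmul_eq_mul]
  ring

theorem bcvmLogLikelihoodRatio_sub_lan_eq {κ1 κ2 : ℝ} {Θ : ℕ → Ω → ℝ × ℝ}
    (hΘ0 : Measurable (Θ 0)) (hlaw0 : μ.map (Θ 0) = bcvmMeasure κ1 κ2 0) (k : Fin 3 → ℝ)
    {n : ℕ} (hn : 0 < n) (ω : Ω) :
    bcvmLogLikelihoodRatio κ1 κ2 Θ n k ω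
      - ((∑ j, k j * centralSeq μ Θ n ω j)
        - 1 / 2 * ∑ j, ∑ l, k j * GammaLAN μ (Θ 0) j l * k l)
    = -(n * (cgf (fun ω => ∑ j, k j * bcvmStat (Θ 0 ω) j) μ (√n)⁻¹
        - (√n)⁻¹ * ∫ ω, ∑ j, k j * bcvmStat (Θ 0 ω) j ∂μ
        - ((√n)⁻¹) ^ 2 / 2 * Var[fun ω => ∑ j, k j * bcvmStat (Θ 0 ω) j; μ])) := by
  have hind := indepFun_of_map_eq_bcvmMeasure_zero hΘ0 hlaw0
  have hsin1 := integral_sin_fst_of_map_eq_bcvmMeasure_zero hΘ0 hlaw0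
  have hsin2 := integral_sin_snd_of_map_eq_bcvmMeasure_zero hΘ0 hlaw0
  have hcos := integral_cos_sub_of_indepFun (by fun_prop) (by fun_prop) hind hsin2
  have hllr : ∀ i, log (bcvmDensity (κ1 + (√n)⁻¹ * k 0) (κ2 + (√n)⁻¹ * k 1)
        ((√n)⁻¹ * k 2) (Θ i ω) / bcvmDensity κ1 κ2 0 (Θ i ω))
      = (√n)⁻¹ * ∑ j, k j * bcvmStat (Θ i ω) j
        - cgf (fun p => ∑ j, k j * bcvmStat p j) (μ.map (Θ 0)) (√n)⁻¹ := fun i => by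
    simpa only [zero_add, hlaw0] using log_bcvmDensity_div κ1 κ2 0 (√n)⁻¹ k (Θ i ω)
  have hcgf : cgf (fun p => ∑ j, k j * bcvmStat p j) (μ.map (Θ 0)) (√n)⁻¹
      = cgf (fun ω => ∑ j, k j * bcvmStat (Θ 0 ω) j) μ (√n)⁻¹ := by
    rw [cgf, cgf, mgf_map hΘ0.aemeasurable (Continuous.aestronglyMeasurable (by fun_prop))]
    rfl
  have hw : (n : ℝ) * ((√n)⁻¹) ^ 2 = 1 := by
    rw [inv_pow, Real.sq_sqrt (Nat.cast_nonneg n)]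
    exact mul_inv_cancel₀ (Nat.cast_ne_zero.2 hn.ne')
  rw [bcvmLogLikelihoodRatio, Finset.sum_congr rfl fun i _ => hllr i, Finset.sum_sub_distrib,
    ← Finset.mul_sum, Finset.sum_const, Finset.card_range, nsmul_eq_mul, hcgf,
    sum_mul_centralSeq hΘ0.aemeasurable hcos,
    sum_mul_GammaLAN_mul_eq_variance hΘ0.aemeasurable hind hsin1 hsin2]
  linear_combination (-Var[fun ω => ∑ j, k j * bcvmStat (Θ 0 ω) j; μ] / 2) * hw

theorem abs_bcvmLogLikelihoodRatio_sub_lan_le {κ1 κ2 : ℝ} {Θ : ℕ → Ω → ℝ × ℝ}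
    (hΘ0 : Measurable (Θ 0)) (hlaw0 : μ.map (Θ 0) = bcvmMeasure κ1 κ2 0) {k : Fin 3 → ℝ}
    {M : ℝ} (hk : ∀ j, |k j| ≤ M) {n : ℕ} (hn : 0 < n) (hnM : 18 * M ≤ √n) (ω : Ω) :
    |bcvmLogLikelihoodRatio κ1 κ2 Θ n k ω
      - ((∑ j, k j * centralSeq μ Θ n ω j)
        - 1 / 2 * ∑ j, ∑ l, k j * GammaLAN μ (Θ 0) j l * k l)|
    ≤ 60 * (3 * M) ^ 3 / √n := by
  have hsqrt : 0 < √(n : ℝ) := Real.sqrt_pos.2 (Nat.cast_pos.2 hn)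
  have hsmall : |(√n)⁻¹| * (3 * M) ≤ 1 / 6 := by
    rw [abs_inv, abs_of_pos hsqrt, inv_mul_le_iff₀ hsqrt]
    linarith
  have hcgf := abs_cgf_sub_taylor_two_le (μ := μ) (X := fun ω => ∑ j, k j * bcvmStat (Θ 0 ω) j)
    (by fun_prop) (ae_of_all _ fun ω => abs_sum_mul_bcvmStat_le hk _) hsmall
  rw [bcvmLogLikelihoodRatio_sub_lan_eq hΘ0 hlaw0 k hn ω, abs_neg, abs_mul, Nat.abs_cast]
  calc (n : ℝ) * |_| ≤ n * (60 * (|(√n)⁻¹| * (3 * M)) ^ 3) := by gcongr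
    _ = 60 * (3 * M) ^ 3 / √n := by
      have hn2 : (n : ℝ) = √n ^ 2 := (Real.sq_sqrt (Nat.cast_nonneg n)).symm
      set s := √(n : ℝ)
      rw [abs_inv, abs_of_pos hsqrt, hn2]
      field_simp

end LocalAsymptoticNormality

theorem bcvm_local_asymptotic_normality_general
    {Ω : Type*} [MeasurableSpace Ω] (μ : Measure Ω) [IsProbabilityMeasure μ]
    (κ1 κ2 : ℝ)
    (Θ : ℕ → Ω → ℝ × ℝ) (hΘmeas : ∀ i, Measurable (Θ i))
    (hlaw : ∀ i, Measure.map (Θ i) μ =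
      (volume.restrict (Set.Ico (-Real.pi) Real.pi ×ˢ Set.Ico (-Real.pi) Real.pi)).withDensity
        (fun p => ENNReal.ofReal (bcvmDensity κ1 κ2 0 p)))
    (k : ℕ → Fin 3 → ℝ) (hkbdd : ∃ M : ℝ, ∀ (n : ℕ) (j : Fin 3), |k n j| ≤ M) :
    TendstoInMeasure μ
      (fun (n : ℕ) ω =>
        (∑ i ∈ Finset.range n,
            Real.log
              (bcvmDensity (κ1 + (Real.sqrt n)⁻¹ * k n 0) (κ2 + (Real.sqrt n)⁻¹ * k n 1)
                  ((Real.sqrt n)⁻¹ * k n 2) (Θ i ω)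
                / bcvmDensity κ1 κ2 0 (Θ i ω)))
          - ((∑ j : Fin 3, k n j * centralSeq μ Θ n ω j)
              - (1 / 2) * ∑ j : Fin 3, ∑ l : Fin 3, k n j * GammaLAN μ (Θ 0) j l * k n l))
      atTop (fun _ => (0 : ℝ)) := by
  obtain ⟨M, hM⟩ := hkbdd
  have hsqrt : Tendsto (fun n : ℕ => √(n : ℝ)) atTop atTop :=
    Real.tendsto_sqrt_atTop.comp tendsto_natCast_atTop_atTop
  refine tendstoInMeasure_zero_of_abs_le (b := fun n : ℕ => 60 * (3 * M) ^ 3 / √(n : ℝ))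
    (tendsto_const_nhds.div_atTop hsqrt) ?_
  filter_upwards [eventually_gt_atTop 0, hsqrt.eventually_ge_atTop (18 * M)] with n hn hnM ω
  exact abs_bcvmLogLikelihoodRatio_sub_lan_le (hΘmeas 0) (hlaw 0) (hM n) hn hnM ω

/-- Local asymptotic normality of the bivariate cosine von Mises model at `κ₃ = 0`:
the log-likelihood ratio `Λ^{(n)}` admits the quadratic expansion
`Λ^{(n)} = kₙ'Δ^{(n)} − ½ kₙ'Γkₙ + o_P(1)` under the null. -/
theorem bcvm_local_asymptotic_normality
    {Ω : Type*} [MeasurableSpace Ω] (μ : Measure Ω) [IsProbabilityMeasure μ]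
    (κ1 κ2 : ℝ) (hκ1 : 0 ≤ κ1) (hκ2 : 0 ≤ κ2)
    (Θ : ℕ → Ω → ℝ × ℝ) (hΘmeas : ∀ i, Measurable (Θ i))
    (hiid : iIndepFun Θ μ)
    (hlaw : ∀ i, Measure.map (Θ i) μ =
      (volume.restrict (Set.Ico (-Real.pi) Real.pi ×ˢ Set.Ico (-Real.pi) Real.pi)).withDensity
        (fun p => ENNReal.ofReal (bcvmDensity κ1 κ2 0 p)))
    (k : ℕ → Fin 3 → ℝ) (hkbdd : ∃ M : ℝ, ∀ (n : ℕ) (j : Fin 3), |k n j| ≤ M)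
    (hpos1 : ∀ n : ℕ, 0 ≤ κ1 + (Real.sqrt n)⁻¹ * k n 0)
    (hpos2 : ∀ n : ℕ, 0 ≤ κ2 + (Real.sqrt n)⁻¹ * k n 1) :
    TendstoInMeasure μ
      (fun (n : ℕ) ω =>
        (∑ i ∈ Finset.range n,
            Real.log
              (bcvmDensity (κ1 + (Real.sqrt n)⁻¹ * k n 0) (κ2 + (Real.sqrt n)⁻¹ * k n 1)
                  ((Real.sqrt n)⁻¹ * k n 2) (Θ i ω)
                / bcvmDensity κ1 κ2 0 (Θ i ω)))
          - ((∑ j : Fin 3, k n j * centralSeq μ Θ n ω j)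
              - (1 / 2) * ∑ j : Fin 3, ∑ l : Fin 3, k n j * GammaLAN μ (Θ 0) j l * k n l))
      atTop (fun _ => (0 : ℝ)) :=
  bcvm_local_asymptotic_normality_general μ κ1 κ2 Θ hΘmeas hlaw k hkbdd
end

section
/- Fix (r₁, r₂) ∈ ℝ² and locations μ¹, μ² ∈ ℝ. Suppose θ¹ and θ² are independent, and let μ̂ⁿ¹, μ̂ⁿ² be sequences of random variables (estimators computed from the sample) such that √n(μ̂ⁿ¹ − μ¹) and √n(μ̂ⁿ² − μ²) are O_P(1). Denote by D̂_c^{(n)}(r₁,r₂) the cosine statistic computed from the estimator-centred sample (θ¹ᵢ − μ̂ⁿ¹, θ²ᵢ − μ̂ⁿ²), i = 1,…,n, and by D_c^{(n)}(r₁,r₂) the cosine statistic computed from the sample (θ¹ᵢ − μ¹, θ²ᵢ − μ²), i = 1,…,n. Then √n (D̂_c^{(n)}(r₁,r₂) − D_c^{(n)}(r₁,r₂)) converges to 0 in probability as n → ∞. -/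
/-! Let `Z_n` be the empirical joint characteristic function of the sample at `(r₁, r₂)` minus
the product of the empirical marginal ones, so that `D_c = Re Z_n`. Shifting the sample by `(c, d)`
multiplies `Z_n` by the unit `exp (-i (r₁ c + r₂ d))`, so it changes `D_c` by at most
`|r₁ c + r₂ d| ‖Z_n‖`, and `‖Z_n‖` does not depend on the centring. For the estimated centres,
`√n |r₁ c + r₂ d|` is `O_P(1)`, while `Z_n → 0` almost surely by the strong law of large numbers,
because independence of `θ¹` and `θ²` makes the joint characteristic function factor. -/

open MeasureTheory ProbabilityTheory Filter Real
open scoped NNReal BigOperators Topology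

/-- A sequence of random variables is bounded in probability (`O_P(1)`). -/
def BoundedInProbability {Ω : Type*} [MeasurableSpace Ω] (μ : Measure Ω)
    (X : ℕ → Ω → ℝ) : Prop :=
  ∀ ε : ℝ, 0 < ε → ∃ M : ℝ, 0 < M ∧ ∀ n : ℕ, μ {ω | M < |X n ω|} < ENNReal.ofReal ε

noncomputable def DcComplex (r1 r2 : ℝ) (n : ℕ) (a b : ℕ → ℝ) : ℂ :=
  (n : ℝ)⁻¹ • ∑ i ∈ Finset.range n, Complex.exp ((r1 * a i + r2 * b i : ℝ) * Complex.I)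
    - ((n : ℝ)⁻¹ • ∑ i ∈ Finset.range n, Complex.exp ((r1 * a i : ℝ) * Complex.I))
      * ((n : ℝ)⁻¹ • ∑ i ∈ Finset.range n, Complex.exp ((r2 * b i : ℝ) * Complex.I))

theorem re_DcComplex (r1 r2 : ℝ) (n : ℕ) (a b : ℕ → ℝ) :
    (DcComplex r1 r2 n a b).re = Dc r1 r2 n a b := by
  simp only [DcComplex, Dc, Complex.sub_re, Complex.mul_re, Complex.smul_re, Complex.smul_im,
    Complex.re_sum, Complex.im_sum, Complex.exp_ofReal_mul_I_re, Complex.exp_ofReal_mul_I_im,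
    smul_eq_mul]
  ring

theorem DcComplex_sub_const (r1 r2 c d : ℝ) (n : ℕ) (a b : ℕ → ℝ) :
    DcComplex r1 r2 n (fun i => a i - c) (fun i => b i - d)
      = Complex.exp ((-(r1 * c + r2 * d) : ℝ) * Complex.I) * DcComplex r1 r2 n a b := by
  set u₁ := Complex.exp ((-(r1 * c) : ℝ) * Complex.I)
  set u₂ := Complex.exp ((-(r2 * d) : ℝ) * Complex.I)
  have h₁₂ : ∀ i, Complex.exp ((r1 * (a i - c) + r2 * (b i - d) : ℝ) * Complex.I)
      = u₁ * u₂ * Complex.exp ((r1 * a i + r2 * b i : ℝ) * Complex.I) := fun i => by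
    simp only [u₁, u₂, ← Complex.exp_add]; push_cast; ring_nf
  have h₁ : ∀ i, Complex.exp ((r1 * (a i - c) : ℝ) * Complex.I)
      = u₁ * Complex.exp ((r1 * a i : ℝ) * Complex.I) := fun i => by
    simp only [u₁, ← Complex.exp_add]; push_cast; ring_nf
  have h₂ : ∀ i, Complex.exp ((r2 * (b i - d) : ℝ) * Complex.I)
      = u₂ * Complex.exp ((r2 * b i : ℝ) * Complex.I) := fun i => by
    simp only [u₂, ← Complex.exp_add]; push_cast; ring_nf
  have hu : Complex.exp ((-(r1 * c + r2 * d) : ℝ) * Complex.I) = u₁ * u₂ := by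
    simp only [u₁, u₂, ← Complex.exp_add]; push_cast; ring_nf
  simp only [DcComplex, h₁₂, h₁, h₂, hu, ← Finset.mul_sum, Complex.real_smul]
  ring

theorem norm_DcComplex_sub_const (r1 r2 c d : ℝ) (n : ℕ) (a b : ℕ → ℝ) :
    ‖DcComplex r1 r2 n (fun i => a i - c) (fun i => b i - d)‖ = ‖DcComplex r1 r2 n a b‖ := by
  rw [DcComplex_sub_const, norm_mul, Complex.norm_exp_ofReal_mul_I, one_mul]

theorem abs_Dc_sub_const_sub_Dc_le (r1 r2 c d : ℝ) (n : ℕ) (a b : ℕ → ℝ) :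
    |Dc r1 r2 n (fun i => a i - c) (fun i => b i - d) - Dc r1 r2 n a b|
      ≤ |r1 * c + r2 * d| * ‖DcComplex r1 r2 n a b‖ := by
  rw [← re_DcComplex, ← re_DcComplex, DcComplex_sub_const, ← Complex.sub_re, ← sub_one_mul]
  calc _ ≤ ‖(Complex.exp ((-(r1 * c + r2 * d) : ℝ) * Complex.I) - 1) * DcComplex r1 r2 n a b‖ :=
        Complex.abs_re_le_norm _
    _ ≤ |r1 * c + r2 * d| * ‖DcComplex r1 r2 n a b‖ := by
        rw [norm_mul, mul_comm _ Complex.I, ← abs_neg (r1 * c + r2 * d)]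
        gcongr
        exact Real.norm_exp_I_mul_ofReal_sub_one_le

theorem abs_Dc_sub_Dc_le_of_recentre (r1 r2 c d c' d' : ℝ) (n : ℕ) (a b : ℕ → ℝ) :
    |Dc r1 r2 n (fun i => a i - c') (fun i => b i - d')
        - Dc r1 r2 n (fun i => a i - c) (fun i => b i - d)|
      ≤ |r1 * (c' - c) + r2 * (d' - d)| * ‖DcComplex r1 r2 n a b‖ := by
  have h := abs_Dc_sub_const_sub_Dc_le r1 r2 (c' - c) (d' - d) n
    (fun i => a i - c) (fun i => b i - d)
  simpa only [sub_sub_sub_cancel_right, norm_DcComplex_sub_const] using h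

section Probability

variable {Ω : Type*} [MeasurableSpace Ω] {μ : Measure Ω}

theorem ae_tendsto_average_comp {β E : Type*} [MeasurableSpace β] [NormedAddCommGroup E]
    [NormedSpace ℝ E] [CompleteSpace E] [MeasurableSpace E] [BorelSpace E]
    {Θ : ℕ → Ω → β} {Y : Ω → β} (hiid : iIndepFun Θ μ) (hident : ∀ i, IdentDistrib (Θ i) Y μ μ)
    {g : β → E} (hg : Measurable g) (hint : Integrable (fun ω => g (Y ω)) μ) :
    ∀ᵐ ω ∂μ, Tendsto (fun n : ℕ => (n : ℝ)⁻¹ • ∑ i ∈ Finset.range n, g (Θ i ω)) atTop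
      (𝓝 (∫ ω, g (Y ω) ∂μ)) := by
  have hgΘ : ∀ i, IdentDistrib (fun ω => g (Θ i ω)) (fun ω => g (Y ω)) μ μ :=
    fun i => (hident i).comp hg
  have h := strong_law_ae (fun i ω => g (Θ i ω)) ((hgΘ 0).integrable_iff.mpr hint)
    (fun i j hij => (hiid.indepFun hij).comp hg hg) (fun i => (hgΘ i).trans (hgΘ 0).symm)
  rwa [(hgΘ 0).integral_eq] at h

theorem integrable_exp_ofReal_mul_I [IsFiniteMeasure μ] {X : Ω → ℝ} (hX : AEMeasurable X μ) :
    Integrable (fun ω => Complex.exp (X ω * Complex.I)) μ :=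
  .of_bound (by fun_prop) 1 (ae_of_all _ fun ω => (Complex.norm_exp_ofReal_mul_I _).le)

theorem IndepFun.integral_exp_add_mul_I {X Y : Ω → ℝ}
    (hXY : IndepFun X Y μ) (hX : AEMeasurable X μ) (hY : AEMeasurable Y μ) :
    ∫ ω, Complex.exp ((X ω + Y ω : ℝ) * Complex.I) ∂μ
      = (∫ ω, Complex.exp (X ω * Complex.I) ∂μ) * ∫ ω, Complex.exp (Y ω * Complex.I) ∂μ := by
  simp only [Complex.ofReal_add, add_mul, Complex.exp_add]
  exact hXY.integral_fun_comp_mul_comp (f := fun x : ℝ => Complex.exp (x * Complex.I))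
    (g := fun x : ℝ => Complex.exp (x * Complex.I)) hX hY
    (Continuous.aestronglyMeasurable (by fun_prop)) (Continuous.aestronglyMeasurable (by fun_prop))

theorem ae_tendsto_DcComplex_zero [IsFiniteMeasure μ] {θ1 θ2 : Ω → ℝ}
    (hindep : IndepFun θ1 θ2 μ) {Θ : ℕ → Ω → ℝ × ℝ} (hiid : iIndepFun Θ μ)
    (hident : ∀ i, IdentDistrib (Θ i) (fun ω => (θ1 ω, θ2 ω)) μ μ) (r1 r2 : ℝ) :
    ∀ᵐ ω ∂μ, Tendsto (fun n => DcComplex r1 r2 n (fun i => (Θ i ω).1) (fun i => (Θ i ω).2))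
      atTop (𝓝 0) := by
  have hθ1 : AEMeasurable θ1 μ := (hident 0).aemeasurable_snd.fst
  have hθ2 : AEMeasurable θ2 μ := (hident 0).aemeasurable_snd.snd
  have hjoint := ae_tendsto_average_comp hiid hident
    (g := fun p => Complex.exp ((r1 * p.1 + r2 * p.2 : ℝ) * Complex.I)) (by fun_prop)
    (integrable_exp_ofReal_mul_I (by fun_prop))
  have hfst := ae_tendsto_average_comp hiid hident
    (g := fun p => Complex.exp ((r1 * p.1 : ℝ) * Complex.I)) (by fun_prop)
    (integrable_exp_ofReal_mul_I (by fun_prop))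
  have hsnd := ae_tendsto_average_comp hiid hident
    (g := fun p => Complex.exp ((r2 * p.2 : ℝ) * Complex.I)) (by fun_prop)
    (integrable_exp_ofReal_mul_I (by fun_prop))
  have hfactor := IndepFun.integral_exp_add_mul_I
    (X := fun ω => r1 * θ1 ω) (Y := fun ω => r2 * θ2 ω)
    (hindep.comp (measurable_const_mul r1) (measurable_const_mul r2))
    (hθ1.const_mul r1) (hθ2.const_mul r2)
  filter_upwards [hjoint, hfst, hsnd] with ω hjoint hfst hsnd
  simpa only [DcComplex, hfactor, sub_self] using hjoint.sub (hfst.mul hsnd)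

theorem aemeasurable_DcComplex {Θ : ℕ → Ω → ℝ × ℝ} (hΘ : ∀ i, AEMeasurable (Θ i) μ)
    (r1 r2 : ℝ) (n : ℕ) :
    AEMeasurable (fun ω => DcComplex r1 r2 n (fun i => (Θ i ω).1) (fun i => (Θ i ω).2)) μ := by
  unfold DcComplex
  fun_prop

theorem BoundedInProbability.const_mul {X : ℕ → Ω → ℝ} (hX : BoundedInProbability μ X) (c : ℝ) :
    BoundedInProbability μ (fun n ω => c * X n ω) := by
  intro ε hε
  obtain ⟨M, hM, hXM⟩ := hX ε hε
  refine ⟨(|c| + 1) * M, by positivity,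
    fun n => lt_of_le_of_lt (measure_mono fun ω hω => ?_) (hXM n)⟩
  simp only [Set.mem_ofPred_eq, abs_mul] at hω ⊢
  by_contra! h
  nlinarith [abs_nonneg c]

theorem BoundedInProbability.add {X Y : ℕ → Ω → ℝ} (hX : BoundedInProbability μ X)
    (hY : BoundedInProbability μ Y) : BoundedInProbability μ (fun n ω => X n ω + Y n ω) := by
  intro ε hε
  obtain ⟨M₁, hM₁, hXM₁⟩ := hX (ε / 2) (half_pos hε)
  obtain ⟨M₂, hM₂, hYM₂⟩ := hY (ε / 2) (half_pos hε)
  refine ⟨M₁ + M₂, add_pos hM₁ hM₂, fun n => ?_⟩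
  have hsub : {ω | M₁ + M₂ < |X n ω + Y n ω|} ⊆ {ω | M₁ < |X n ω|} ∪ {ω | M₂ < |Y n ω|} := by
    intro ω hω
    by_contra! h
    simp only [Set.mem_union, Set.mem_ofPred_eq, not_or, not_lt] at hω h
    linarith [abs_add_le (X n ω) (Y n ω)]
  calc μ {ω | M₁ + M₂ < |X n ω + Y n ω|}
      ≤ μ {ω | M₁ < |X n ω|} + μ {ω | M₂ < |Y n ω|} :=
        (measure_mono hsub).trans (measure_union_le _ _)
    _ < ENNReal.ofReal (ε / 2) + ENNReal.ofReal (ε / 2) := ENNReal.add_lt_add (hXM₁ n) (hYM₂ n)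
    _ = ENNReal.ofReal ε := by rw [← ENNReal.ofReal_add (by positivity) (by positivity), add_halves]

theorem BoundedInProbability.tendstoInMeasure_zero_of_abs_le_mul {f G B : ℕ → Ω → ℝ}
    (hG : BoundedInProbability μ G) (hB : TendstoInMeasure μ B atTop (fun _ => 0))
    (hf : ∀ n ω, |f n ω| ≤ |G n ω| * |B n ω|) : TendstoInMeasure μ f atTop (fun _ => 0) := by
  rw [tendstoInMeasure_iff_norm] at hB ⊢
  intro ε hε
  rw [ENNReal.tendsto_nhds_zero]
  intro η hη
  obtain ⟨δ, -, hδ, hδη⟩ := ENNReal.lt_iff_exists_real_btwn.mp (ENNReal.half_pos hη.ne')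
  obtain ⟨M, hM, hGM⟩ := hG δ (ENNReal.ofReal_pos.mp hδ)
  have hBsmall := ENNReal.tendsto_nhds_zero.mp (hB (ε / M) (by positivity)) (η / 2)
    (ENNReal.half_pos hη.ne')
  filter_upwards [hBsmall] with n hn
  have hsub : {ω | ε ≤ ‖f n ω - 0‖} ⊆ {ω | M < |G n ω|} ∪ {ω | ε / M ≤ ‖B n ω - 0‖} := by
    intro ω hω
    by_contra! h
    simp only [Set.mem_union, Set.mem_ofPred_eq, not_or, not_lt, not_le, sub_zero,
      Real.norm_eq_abs] at hω h
    have : |f n ω| < ε := calc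
      |f n ω| ≤ |G n ω| * |B n ω| := hf n ω
      _ ≤ M * |B n ω| := by gcongr; exact h.1
      _ < M * (ε / M) := by gcongr; exact h.2
      _ = ε := mul_div_cancel₀ _ hM.ne'
    linarith
  calc μ {ω | ε ≤ ‖f n ω - 0‖}
      ≤ μ {ω | M < |G n ω|} + μ {ω | ε / M ≤ ‖B n ω - 0‖} :=
        (measure_mono hsub).trans (measure_union_le _ _)
    _ ≤ η / 2 + η / 2 := add_le_add ((hGM n).le.trans hδη.le) hn
    _ = η := ENNReal.add_halves η

end Probability

theorem Dc_centring_invariance_general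
    {Ω : Type*} [MeasurableSpace Ω] (μ : Measure Ω) [IsProbabilityMeasure μ]
    (θ1 θ2 : Ω → ℝ)
    (hindep : IndepFun θ1 θ2 μ)
    (Θ : ℕ → Ω → ℝ × ℝ)
    (hiid : iIndepFun Θ μ)
    (hident : ∀ i, IdentDistrib (Θ i) (fun ω => (θ1 ω, θ2 ω)) μ μ)
    (r1 r2 : ℝ) (μ1 μ2 : ℝ)
    (μhat1 μhat2 : ℕ → Ω → ℝ)
    (hμhat1 : BoundedInProbability μ (fun n ω => Real.sqrt n * (μhat1 n ω - μ1)))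
    (hμhat2 : BoundedInProbability μ (fun n ω => Real.sqrt n * (μhat2 n ω - μ2))) :
    TendstoInMeasure μ
      (fun (n : ℕ) ω =>
        Real.sqrt n *
          (Dc r1 r2 n (fun i => (Θ i ω).1 - μhat1 n ω) (fun i => (Θ i ω).2 - μhat2 n ω)
            - Dc r1 r2 n (fun i => (Θ i ω).1 - μ1) (fun i => (Θ i ω).2 - μ2)))
      atTop (fun _ => (0 : ℝ)) := by
  set Z : ℕ → Ω → ℂ := fun n ω => DcComplex r1 r2 n (fun i => (Θ i ω).1) (fun i => (Θ i ω).2)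
  have hZ : TendstoInMeasure μ (fun n ω => ‖Z n ω‖) atTop (fun _ => 0) := by
    refine tendstoInMeasure_of_tendsto_ae (fun n => (aemeasurable_DcComplex
      (fun i => (hident i).aemeasurable_fst) r1 r2 n).norm.aestronglyMeasurable) ?_
    filter_upwards [ae_tendsto_DcComplex_zero hindep hiid hident r1 r2] with ω h
    simpa using h.norm
  refine ((hμhat1.const_mul r1).add (hμhat2.const_mul r2)).tendstoInMeasure_zero_of_abs_le_mul
    hZ fun n ω => ?_
  have hrecentre := abs_Dc_sub_Dc_le_of_recentre r1 r2 μ1 μ2 (μhat1 n ω) (μhat2 n ω) n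
    (fun i => (Θ i ω).1) (fun i => (Θ i ω).2)
  have hsqrt : 0 ≤ Real.sqrt n := Real.sqrt_nonneg _
  calc _ = Real.sqrt n
          * |Dc r1 r2 n (fun i => (Θ i ω).1 - μhat1 n ω) (fun i => (Θ i ω).2 - μhat2 n ω)
            - Dc r1 r2 n (fun i => (Θ i ω).1 - μ1) (fun i => (Θ i ω).2 - μ2)| := by
        rw [abs_mul, abs_of_nonneg hsqrt]
    _ ≤ Real.sqrt n * (|r1 * (μhat1 n ω - μ1) + r2 * (μhat2 n ω - μ2)| * ‖Z n ω‖) := by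
        gcongr
    _ = _ := by
        rw [abs_norm, show ∀ c d : ℝ, r1 * (Real.sqrt n * c) + r2 * (Real.sqrt n * d)
          = Real.sqrt n * (r1 * c + r2 * d) from fun c d => by ring, abs_mul,
          abs_of_nonneg hsqrt, mul_assoc]

/-- Proposition 3: estimated centring has no asymptotic effect on the cosine statistic,
`√n (D̂_c^{(n)}(r₁,r₂) − D_c^{(n)}(r₁,r₂)) = o_P(1)`. -/
theorem Dc_centring_invariance
    {Ω : Type*} [MeasurableSpace Ω] (μ : Measure Ω) [IsProbabilityMeasure μ]
    (θ1 θ2 : Ω → ℝ) (hθ1 : Measurable θ1) (hθ2 : Measurable θ2)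
    (hindep : IndepFun θ1 θ2 μ)
    (Θ : ℕ → Ω → ℝ × ℝ) (hΘmeas : ∀ i, Measurable (Θ i))
    (hiid : iIndepFun Θ μ)
    (hident : ∀ i, IdentDistrib (Θ i) (fun ω => (θ1 ω, θ2 ω)) μ μ)
    (r1 r2 : ℝ) (μ1 μ2 : ℝ)
    (μhat1 μhat2 : ℕ → Ω → ℝ)
    (hμhat1meas : ∀ n, Measurable (μhat1 n)) (hμhat2meas : ∀ n, Measurable (μhat2 n))
    (hμhat1 : BoundedInProbability μ (fun n ω => Real.sqrt n * (μhat1 n ω - μ1)))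
    (hμhat2 : BoundedInProbability μ (fun n ω => Real.sqrt n * (μhat2 n ω - μ2))) :
    TendstoInMeasure μ
      (fun (n : ℕ) ω =>
        Real.sqrt n *
          (Dc r1 r2 n (fun i => (Θ i ω).1 - μhat1 n ω) (fun i => (Θ i ω).2 - μhat2 n ω)
            - Dc r1 r2 n (fun i => (Θ i ω).1 - μ1) (fun i => (Θ i ω).2 - μ2)))
      atTop (fun _ => (0 : ℝ)) :=
  Dc_centring_invariance_general μ θ1 θ2 hindep Θ hiid hident r1 r2 μ1 μ2 μhat1 μhat2 hμhat1 hμhat2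
end

section
/- Let w : ℤ² → [0,∞) satisfy Σ_{(r₁,r₂)∈ℤ²} w(r₁,r₂) < ∞. Then, for any pair of real-valued random variables (θ¹, θ²) and an i.i.d. sample (θ¹ᵢ, θ²ᵢ), i = 1,…,n, from it, T_{n,w}/n converges almost surely, as n → ∞, to 𝒯_w := Σ_{(r₁,r₂)∈ℤ²} |φ(r₁,r₂) − φ₁(r₁)φ₂(r₂)|² w(r₁,r₂). -/
open MeasureTheory ProbabilityTheory Filter Real
open scoped BigOperators Topology

/-- The empirical characteristic function difference
`D^{(n)}(r₁,r₂) = φ̂(r₁,r₂) − φ̂₁(r₁)φ̂₂(r₂)` computed from the sample `(a j, b j)`, `j < n`. -/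
noncomputable def ecfD (n : ℕ) (a b : ℕ → ℝ) (r : ℤ × ℤ) : ℂ :=
  (n : ℂ)⁻¹ * ∑ j ∈ Finset.range n, Complex.exp (Complex.I * (((r.1 : ℝ) * a j + (r.2 : ℝ) * b j : ℝ) : ℂ))
    - ((n : ℂ)⁻¹ * ∑ j ∈ Finset.range n, Complex.exp (Complex.I * (((r.1 : ℝ) * a j : ℝ) : ℂ)))
        * ((n : ℂ)⁻¹ * ∑ j ∈ Finset.range n, Complex.exp (Complex.I * (((r.2 : ℝ) * b j : ℝ) : ℂ)))

/-!
By the strong law of large numbers, applied to the bounded functions `p ↦ exp (i ⟨r, p⟩)` of the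
sample, each of the countably many empirical characteristic functions converges almost surely,
simultaneously for all frequencies `r`. Hence `D⁽ⁿ⁾(r)` converges to its population counterpart
for every `r`, and since `|D⁽ⁿ⁾(r)| ≤ 2` the summability of `w` lets dominated convergence pass to
the limit in `T_{n,w} / n = Σ_r |D⁽ⁿ⁾(r)|² w(r)`.
-/

/-- The population counterpart `φ(r₁,r₂) − φ₁(r₁)φ₂(r₂)` of `ecfD`. -/
noncomputable def charFunDiff {Ω : Type*} [MeasurableSpace Ω] (μ : Measure Ω) (θ1 θ2 : Ω → ℝ)
    (r : ℤ × ℤ) : ℂ :=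
  (∫ ω, Complex.exp (Complex.I * (((r.1 : ℝ) * θ1 ω + (r.2 : ℝ) * θ2 ω : ℝ) : ℂ)) ∂μ)
    - (∫ ω, Complex.exp (Complex.I * (((r.1 : ℝ) * θ1 ω : ℝ) : ℂ)) ∂μ)
      * (∫ ω, Complex.exp (Complex.I * (((r.2 : ℝ) * θ2 ω : ℝ) : ℂ)) ∂μ)

lemma norm_inv_natCast_mul_sum_le_one {n : ℕ} {c : ℕ → ℂ} (hc : ∀ j, ‖c j‖ ≤ 1) :
    ‖(n : ℂ)⁻¹ * ∑ j ∈ Finset.range n, c j‖ ≤ 1 := by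
  have hsum : ‖∑ j ∈ Finset.range n, c j‖ ≤ n := by
    simpa using norm_sum_le_of_le (Finset.range n) fun j _ => hc j
  rw [norm_mul, norm_inv, Complex.norm_natCast]
  exact inv_mul_le_one_of_le₀ hsum n.cast_nonneg

lemma norm_inv_natCast_mul_sum_cexp_le_one (n : ℕ) (x : ℕ → ℝ) :
    ‖(n : ℂ)⁻¹ * ∑ j ∈ Finset.range n, Complex.exp (Complex.I * (x j : ℂ))‖ ≤ 1 :=
  norm_inv_natCast_mul_sum_le_one fun j => (Complex.norm_exp_I_mul_ofReal (x j)).le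

lemma norm_ecfD_le_two (n : ℕ) (a b : ℕ → ℝ) (r : ℤ × ℤ) : ‖ecfD n a b r‖ ≤ 2 :=
  calc ‖ecfD n a b r‖ ≤ 1 + 1 * 1 :=
        (norm_sub_le _ _).trans <| add_le_add (norm_inv_natCast_mul_sum_cexp_le_one _ _) <|
          norm_mul_le_of_le (norm_inv_natCast_mul_sum_cexp_le_one _ _)
            (norm_inv_natCast_mul_sum_cexp_le_one _ _)
    _ = 2 := by norm_num

lemma tendsto_tsum_norm_sq_mul {ι β E : Type*} [NormedAddCommGroup E] {l : Filter ι}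
    {F : ι → β → E} {f : β → E} {w : β → ℝ} {C : ℝ} (hw : Summable w)
    (hF : ∀ n r, ‖F n r‖ ≤ C) (hlim : ∀ r, Tendsto (fun n => F n r) l (𝓝 (f r))) :
    Tendsto (fun n => ∑' r, ‖F n r‖ ^ 2 * w r) l (𝓝 (∑' r, ‖f r‖ ^ 2 * w r)) := by
  refine tendsto_tsum_of_dominated_convergence (bound := fun r => C ^ 2 * |w r|)
    (hw.abs.mul_left _) (fun r => ((hlim r).norm.pow 2).mul_const (w r)) ?_
  refine Eventually.of_forall fun n r => ?_
  rw [Real.norm_eq_abs, abs_mul, abs_of_nonneg (by positivity)]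
  gcongr
  exact hF n r

section StrongLaw

variable {Ω α : Type*} [MeasurableSpace Ω] [MeasurableSpace α] {μ : Measure Ω}
  {Θ : ℕ → Ω → α} {Y : Ω → α}

theorem ae_tendsto_avg_comp {E : Type*} [NormedAddCommGroup E] [NormedSpace ℝ E]
    [CompleteSpace E] [MeasurableSpace E] [BorelSpace E]
    (hindep : Pairwise fun i j => Θ i ⟂ᵢ[μ] Θ j) (hident : ∀ i, IdentDistrib (Θ i) Y μ μ)
    {φ : α → E} (hφ : Measurable φ) (hint : Integrable (φ ∘ Y) μ) :
    ∀ᵐ ω ∂μ, Tendsto (fun n : ℕ => (n : ℝ)⁻¹ • ∑ j ∈ Finset.range n, φ (Θ j ω)) atTop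
      (𝓝 (∫ ω, φ (Y ω) ∂μ)) := by
  have hident' : ∀ i, IdentDistrib (φ ∘ Θ i) (φ ∘ Θ 0) μ μ := fun i =>
    ((hident i).trans (hident 0).symm).comp hφ
  have hmean : ∫ ω, φ (Θ 0 ω) ∂μ = ∫ ω, φ (Y ω) ∂μ := ((hident 0).comp hφ).integral_eq
  rw [← hmean]
  exact strong_law_ae (fun i => φ ∘ Θ i) (((hident 0).comp hφ).integrable_iff.mpr hint)
    (fun i j hij => (hindep hij).comp hφ hφ) hident'

theorem ae_tendsto_avg_cexp [IsFiniteMeasure μ]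
    (hindep : Pairwise fun i j => Θ i ⟂ᵢ[μ] Θ j) (hident : ∀ i, IdentDistrib (Θ i) Y μ μ)
    {g : α → ℝ} (hg : Measurable g) :
    ∀ᵐ ω ∂μ, Tendsto
      (fun n : ℕ => (n : ℂ)⁻¹ * ∑ j ∈ Finset.range n, Complex.exp (Complex.I * (g (Θ j ω) : ℂ)))
      atTop (𝓝 (∫ ω, Complex.exp (Complex.I * (g (Y ω) : ℂ)) ∂μ)) := by
  have hφ : Measurable fun p => Complex.exp (Complex.I * (g p : ℂ)) := by fun_prop
  have hint : Integrable (fun ω => Complex.exp (Complex.I * (g (Y ω) : ℂ))) μ :=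
    (integrable_const (1 : ℝ)).mono'
      (hφ.comp_aemeasurable (hident 0).aemeasurable_snd).aestronglyMeasurable
      (ae_of_all _ fun ω => (Complex.norm_exp_I_mul_ofReal _).le)
  filter_upwards [ae_tendsto_avg_comp hindep hident hφ hint] with ω hω
  simpa only [← Complex.ofReal_natCast, ← Complex.ofReal_inv, Complex.real_smul] using hω

end StrongLaw

theorem ae_tendsto_ecfD {Ω : Type*} [MeasurableSpace Ω] {μ : Measure Ω} [IsFiniteMeasure μ]
    {θ1 θ2 : Ω → ℝ} {Θ : ℕ → Ω → ℝ × ℝ} (hindep : Pairwise fun i j => Θ i ⟂ᵢ[μ] Θ j)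
    (hident : ∀ i, IdentDistrib (Θ i) (fun ω => (θ1 ω, θ2 ω)) μ μ) :
    ∀ᵐ ω ∂μ, ∀ r, Tendsto (fun n => ecfD n (fun i => (Θ i ω).1) (fun i => (Θ i ω).2) r) atTop
      (𝓝 (charFunDiff μ θ1 θ2 r)) := by
  rw [ae_all_iff]
  intro r
  filter_upwards
    [ae_tendsto_avg_cexp hindep hident (g := fun p => r.1 * p.1 + r.2 * p.2) (by fun_prop),
    ae_tendsto_avg_cexp hindep hident (g := fun p => r.1 * p.1) (by fun_prop),
    ae_tendsto_avg_cexp hindep hident (g := fun p => r.2 * p.2) (by fun_prop)]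
    with ω hjoint hfst hsnd
  exact hjoint.sub (hfst.mul hsnd)

theorem Tnw_div_n_tendsto_ae_general
    {Ω : Type*} [MeasurableSpace Ω] (μ : Measure Ω) [IsProbabilityMeasure μ]
    (θ1 θ2 : Ω → ℝ)
    (Θ : ℕ → Ω → ℝ × ℝ)
    (hiid : iIndepFun Θ μ)
    (hident : ∀ i, IdentDistrib (Θ i) (fun ω => (θ1 ω, θ2 ω)) μ μ)
    (w : ℤ × ℤ → ℝ) (hsum : Summable w) :
    ∀ᵐ ω ∂μ, Tendsto
      (fun n : ℕ =>
        ((n : ℝ) * ∑' r : ℤ × ℤ,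
            ‖ecfD n (fun i => (Θ i ω).1) (fun i => (Θ i ω).2) r‖ ^ 2 * w r) / (n : ℝ))
      atTop
      (𝓝 (∑' r : ℤ × ℤ,
        ‖(∫ ω', Complex.exp (Complex.I * (((r.1 : ℝ) * θ1 ω' + (r.2 : ℝ) * θ2 ω' : ℝ) : ℂ)) ∂μ)
          - (∫ ω', Complex.exp (Complex.I * (((r.1 : ℝ) * θ1 ω' : ℝ) : ℂ)) ∂μ)
            * (∫ ω', Complex.exp (Complex.I * (((r.2 : ℝ) * θ2 ω' : ℝ) : ℂ)) ∂μ)‖ ^ 2 * w r)) := by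
  filter_upwards [ae_tendsto_ecfD (fun _ _ => hiid.indepFun) hident] with ω hω
  refine (tendsto_tsum_norm_sq_mul hsum (norm_ecfD_le_two · _ _) hω).congr' ?_
  filter_upwards [eventually_ne_atTop 0] with n hn
  exact (mul_div_cancel_left₀ _ (Nat.cast_ne_zero.mpr hn)).symm

/-- Proposition 4 (first part): almost sure convergence of `T_{n,w}/n` to
`𝒯_w = Σ_{(r₁,r₂)∈ℤ²} |φ(r₁,r₂) − φ₁(r₁)φ₂(r₂)|² w(r₁,r₂)`. -/
theorem Tnw_div_n_tendsto_ae
    {Ω : Type*} [MeasurableSpace Ω] (μ : Measure Ω) [IsProbabilityMeasure μ]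
    (θ1 θ2 : Ω → ℝ) (hθ1 : Measurable θ1) (hθ2 : Measurable θ2)
    (Θ : ℕ → Ω → ℝ × ℝ) (hΘmeas : ∀ i, Measurable (Θ i))
    (hiid : iIndepFun Θ μ)
    (hident : ∀ i, IdentDistrib (Θ i) (fun ω => (θ1 ω, θ2 ω)) μ μ)
    (w : ℤ × ℤ → ℝ) (hw : ∀ r, 0 ≤ w r) (hsum : Summable w) :
    ∀ᵐ ω ∂μ, Tendsto
      (fun n : ℕ =>
        ((n : ℝ) * ∑' r : ℤ × ℤ,
            ‖ecfD n (fun i => (Θ i ω).1) (fun i => (Θ i ω).2) r‖ ^ 2 * w r) / (n : ℝ))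
      atTop
      (𝓝 (∑' r : ℤ × ℤ,
        ‖(∫ ω', Complex.exp (Complex.I * (((r.1 : ℝ) * θ1 ω' + (r.2 : ℝ) * θ2 ω' : ℝ) : ℂ)) ∂μ)
          - (∫ ω', Complex.exp (Complex.I * (((r.1 : ℝ) * θ1 ω' : ℝ) : ℂ)) ∂μ)
            * (∫ ω', Complex.exp (Complex.I * (((r.2 : ℝ) * θ2 ω' : ℝ) : ℂ)) ∂μ)‖ ^ 2 * w r)) :=
  Tnw_div_n_tendsto_ae_general μ θ1 θ2 Θ hiid hident w hsum
end

section
/- Let v : ℤ → [0,∞) be symmetric about zero (v(−r) = v(r)) with Σ_{r∈ℤ} v(r) < ∞, and set w(r₁,r₂) := v(r₁)v(r₂) and J_c^{(v)}(θ) := Σ_{r∈ℤ} cos(rθ) v(r). Then, for any real numbers θ¹₁,…,θ¹ₙ and θ²₁,…,θ²ₙ and with θ^{(m)}_{jk} := θ^{(m)}_j − θ^{(m)}_k, the statistic T_{n,w} := n Σ_{(r₁,r₂)∈ℤ²} |D^{(n)}(r₁,r₂)|² w(r₁,r₂) satisfies T_{n,w} = (1/n) Σ_{j,k=1}^{n}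 J_c^{(v)}(θ¹_{jk}) J_c^{(v)}(θ²_{jk}) + (1/n³) [Σ_{j,k=1}^{n} J_c^{(v)}(θ¹_{jk})] [Σ_{j,k=1}^{n} J_c^{(v)}(θ²_{jk})] − (2/n²) Σ_{j,k,ℓ=1}^{n} J_c^{(v)}(θ¹_{jk}) J_c^{(v)}(θ²_{jℓ}). -/
/-!
Write `D = n⁻¹ ∑_{j,l} H_{jl} e^{i r₁ θ¹_j} e^{i r₂ θ²_l}` with the centering matrix
`H = 1 - n⁻¹ 𝟙𝟙ᵀ`. Then `|D|² v(r₁) v(r₂)` is a finite combination of products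
`v(r₁) e^{i r₁ α} · v(r₂) e^{i r₂ β}`, and by the symmetry of `v` each of these sums over `ℤ²` to
`J(α) J(β)`. Hence `T_{n,w} = n⁻¹ tr (A H B H)` with `A_{jk} = J(θ¹_{jk})`, `B_{lm} = J(θ²_{lm})`,
and expanding `H` gives the three terms.
-/

open scoped BigOperators

/-- The kernel `J_c^{(v)}(θ) = Σ_{r∈ℤ} cos(rθ) v(r)`. -/
noncomputable def Jv (v : ℤ → ℝ) (θ : ℝ) : ℝ :=
  ∑' r : ℤ, Real.cos ((r : ℝ) * θ) * v r

open Complex Finset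

noncomputable def expI (x : ℝ) : ℂ := exp (I * x)

lemma expI_add (x y : ℝ) : expI (x + y) = expI x * expI y := by
  simp only [expI, ofReal_add, mul_add, exp_add]

lemma norm_expI (x : ℝ) : ‖expI x‖ = 1 := by
  rw [expI, mul_comm, norm_exp_ofReal_mul_I]

lemma expI_mul_conj_expI (x y : ℝ) : expI x * (starRingEnd ℂ) (expI y) = expI (x - y) := by
  rw [expI, expI, expI, ← exp_conj, ← exp_add, map_mul, conj_I, conj_ofReal, ofReal_sub]
  ring_nf

lemma expI_add_expI_neg (x : ℝ) : expI x + expI (-x) = 2 * Real.cos x := by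
  rw [ofReal_cos, two_cos, expI, expI, ofReal_neg]
  ring_nf

lemma Jv_neg (v : ℤ → ℝ) (θ : ℝ) : Jv v (-θ) = Jv v θ := by
  simp only [Jv, mul_neg, Real.cos_neg]

section Kernel

variable {v : ℤ → ℝ}

lemma summable_norm_mul_expI (hvsum : Summable v) (θ : ℝ) :
    Summable fun r : ℤ => ‖(v r : ℂ) * expI (r * θ)‖ := by
  simpa only [norm_mul, norm_expI, mul_one, norm_real, Real.norm_eq_abs] using hvsum.abs

/-- Pairing `r` with `-r` turns `e^{irθ}` into `2 cos (rθ)`. -/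
lemma hasSum_mul_expI (hvsym : ∀ r : ℤ, v (-r) = v r) (hvsum : Summable v) (θ : ℝ) :
    HasSum (fun r : ℤ => (v r : ℂ) * expI (r * θ)) (Jv v θ) := by
  set g : ℤ → ℂ := fun r => (v r : ℂ) * expI (r * θ)
  have hg : Summable g := (summable_norm_mul_expI hvsum θ).of_norm
  have hpair : ∀ r : ℤ, g r + g (-r) = 2 * ((Real.cos (r * θ) * v r : ℝ) : ℂ) := fun r => by
    simp only [g, hvsym, Int.cast_neg, neg_mul, ← mul_add, expI_add_expI_neg]
    push_cast
    ring
  have htwice : 2 * ∑' r, g r = 2 * (Jv v θ : ℂ) := calc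
    2 * ∑' r, g r = ∑' r, g r + ∑' r, g (-r) := by
      rw [two_mul, tsum_comp_neg]
    _ = 2 * (Jv v θ : ℂ) := by
      have hg' : Summable fun r => g (-r) := hg.comp_injective neg_injective
      rw [← hg.tsum_add hg']
      simp only [hpair, tsum_mul_left, Jv, ofReal_tsum]
  rw [← mul_left_cancel₀ two_ne_zero htwice]
  exact hg.hasSum

lemma hasSum_mul_expI_mul_mul_expI (hvsym : ∀ r : ℤ, v (-r) = v r) (hvsum : Summable v)
    (α β : ℝ) :
    HasSum (fun r : ℤ × ℤ => ((v r.1 : ℂ) * expI (r.1 * α)) * ((v r.2 : ℂ) * expI (r.2 * β)))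
      ((Jv v α : ℂ) * Jv v β) :=
  let f (θ : ℝ) (r : ℤ) : ℂ := v r * expI (r * θ)
  HasSum.mul (f := f α) (g := f β) (hasSum_mul_expI hvsym hvsum α) (hasSum_mul_expI hvsym hvsum β)
    (summable_mul_of_summable_norm (summable_norm_mul_expI hvsum α)
      (summable_norm_mul_expI hvsum β))

end Kernel

section Centering

variable {ι R : Type*} [DecidableEq ι] [CommRing R] (s : Finset ι) (c : R)

/-- Entries of the centering matrix `1 - c 𝟙𝟙ᵀ`; for `c = 1 / n` it subtracts the sample mean. -/
def centering (j l : ι) : R := (if j = l then 1 else 0) - c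

lemma sum_centering_mul {j : ι} (hj : j ∈ s) (f : ι → R) :
    ∑ l ∈ s, centering c j l * f l = f j - c * ∑ l ∈ s, f l := by
  simp [centering, sub_mul, sum_sub_distrib, hj, mul_sum]

lemma mul_sum_mul_sub_eq_sum_sum_centering (x y : ι → R) :
    c * ∑ j ∈ s, x j * y j - (c * ∑ j ∈ s, x j) * (c * ∑ j ∈ s, y j)
      = ∑ j ∈ s, ∑ l ∈ s, c * centering c j l * (x j * y l) := by
  have hrow : ∀ j ∈ s, ∑ l ∈ s, c * centering c j l * (x j * y l)
      = c * x j * y j - c * x j * (c * ∑ l ∈ s, y l) := fun j hj => by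
    rw [← mul_sub, ← sum_centering_mul s c hj, mul_sum]
    exact sum_congr rfl fun l _ => by ring
  rw [sum_congr rfl hrow, sum_sub_distrib]
  simp only [mul_assoc, ← mul_sum, ← sum_mul]

lemma sum_sum_centering_mul_centering_mul {j k : ι} (hj : j ∈ s) (hk : k ∈ s) (B : ι → ι → R) :
    ∑ l ∈ s, ∑ m ∈ s, centering c j l * centering c k m * B l m
      = B j k - c * ∑ m ∈ s, B j m - c * ∑ l ∈ s, B l k + c ^ 2 * ∑ l ∈ s, ∑ m ∈ s, B l m := by
  calc ∑ l ∈ s, ∑ m ∈ s, centering c j l * centering c k m * B l m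
      = ∑ l ∈ s, centering c j l * (B l k - c * ∑ m ∈ s, B l m) := by
        refine sum_congr rfl fun l _ => ?_
        rw [← sum_centering_mul s c hk, mul_sum]
        exact sum_congr rfl fun m _ => by ring
    _ = B j k - c * ∑ m ∈ s, B j m - c * ∑ l ∈ s, (B l k - c * ∑ m ∈ s, B l m) :=
        sum_centering_mul s c hj _
    _ = _ := by
        rw [sum_sub_distrib, ← mul_sum]
        ring

/-- The trace formula `tr (A H B H) = tr (A B) - 2 c 𝟙ᵀ A B 𝟙 + c² (𝟙ᵀ A 𝟙) (𝟙ᵀ B 𝟙)` for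
symmetric `A`, `B` and the centering matrix `H`. -/
lemma sum_centering_mul_centering_mul_mul {A B : ι → ι → R} (hA : ∀ j k, A j k = A k j)
    (hB : ∀ j k, B j k = B k j) :
    ∑ j ∈ s, ∑ k ∈ s, ∑ l ∈ s, ∑ m ∈ s, centering c j l * centering c k m * (A j k * B l m)
      = ∑ j ∈ s, ∑ k ∈ s, A j k * B j k
        + c ^ 2 * (∑ j ∈ s, ∑ k ∈ s, A j k) * (∑ j ∈ s, ∑ k ∈ s, B j k)
        - 2 * c * ∑ j ∈ s, ∑ k ∈ s, ∑ l ∈ s, A j k * B j l := by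
  have hinner : ∀ j ∈ s, ∀ k ∈ s,
      ∑ l ∈ s, ∑ m ∈ s, centering c j l * centering c k m * (A j k * B l m)
        = A j k * B j k - c * (A j k * ∑ l ∈ s, B j l) - c * (A j k * ∑ l ∈ s, B k l)
          + c ^ 2 * (A j k * ∑ l ∈ s, ∑ m ∈ s, B l m) := fun j hj k hk => by
    have hcol : ∑ l ∈ s, B l k = ∑ l ∈ s, B k l := sum_congr rfl fun l _ => hB l k
    simp only [mul_left_comm _ (A j k), ← mul_sum]
    rw [sum_sum_centering_mul_centering_mul s c hj hk, hcol]
    ring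
  have hswap : ∑ j ∈ s, ∑ k ∈ s, A j k * ∑ l ∈ s, B k l
      = ∑ j ∈ s, ∑ k ∈ s, A j k * ∑ l ∈ s, B j l := by
    rw [sum_comm]
    exact sum_congr rfl fun j _ => sum_congr rfl fun k _ => by rw [hA]
  rw [sum_congr rfl fun j hj => sum_congr rfl (hinner j hj)]
  simp only [sum_add_distrib, sum_sub_distrib, ← mul_sum, hswap, ← sum_mul]
  ring

end Centering

lemma ofReal_sq_norm_sum_sum {ι κ : Type*} (s : Finset ι) (t : Finset κ) (w : ι → κ → ℂ) :
    ((‖∑ j ∈ s, ∑ l ∈ t, w j l‖ ^ 2 : ℝ) : ℂ)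
      = ∑ j ∈ s, ∑ k ∈ s, ∑ l ∈ t, ∑ m ∈ t, w j l * (starRingEnd ℂ) (w k m) := by
  rw [ofReal_pow, ← mul_conj']
  simp only [map_sum, sum_mul_sum]

lemma ecfD_eq_sum_sum_centering (n : ℕ) (a b : ℕ → ℝ) (r : ℤ × ℤ) :
    ecfD n a b r = ∑ j ∈ range n, ∑ l ∈ range n,
      (n : ℂ)⁻¹ * centering (n : ℂ)⁻¹ j l * (expI (r.1 * a j) * expI (r.2 * b l)) := by
  rw [← mul_sum_mul_sub_eq_sum_sum_centering (range n) _ (fun j => expI (r.1 * a j))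
    (fun l => expI (r.2 * b l))]
  simp only [← expI_add]
  rfl

lemma ofReal_sq_norm_ecfD_mul (v : ℤ → ℝ) (n : ℕ) (a b : ℕ → ℝ) (r : ℤ × ℤ) :
    ((‖ecfD n a b r‖ ^ 2 * (v r.1 * v r.2) : ℝ) : ℂ)
      = (n : ℂ)⁻¹ ^ 2 * ∑ j ∈ range n, ∑ k ∈ range n, ∑ l ∈ range n, ∑ m ∈ range n,
          centering (n : ℂ)⁻¹ j l * centering (n : ℂ)⁻¹ k m
            * (((v r.1 : ℂ) * expI (r.1 * (a j - a k)))
              * ((v r.2 : ℂ) * expI (r.2 * (b l - b m)))) := by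
  have hc : (starRingEnd ℂ) (n : ℂ)⁻¹ = (n : ℂ)⁻¹ := by simp
  have hH : ∀ k m : ℕ, (starRingEnd ℂ) (centering (n : ℂ)⁻¹ k m) = centering (n : ℂ)⁻¹ k m := by
    intro k m
    simp only [centering, map_sub, hc, apply_ite (starRingEnd ℂ), map_one, map_zero]
  have hterm : ∀ j k l m : ℕ,
      (n : ℂ)⁻¹ * centering (n : ℂ)⁻¹ j l * (expI (r.1 * a j) * expI (r.2 * b l))
          * (starRingEnd ℂ) ((n : ℂ)⁻¹ * centering (n : ℂ)⁻¹ k m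
            * (expI (r.1 * a k) * expI (r.2 * b m))) * ((v r.1 : ℂ) * v r.2)
        = (n : ℂ)⁻¹ ^ 2 * (centering (n : ℂ)⁻¹ j l * centering (n : ℂ)⁻¹ k m
            * (((v r.1 : ℂ) * expI (r.1 * (a j - a k)))
              * ((v r.2 : ℂ) * expI (r.2 * (b l - b m))))) := by
    intro j k l m
    rw [map_mul, map_mul, map_mul, hc, hH, mul_sub, mul_sub, ← expI_mul_conj_expI,
      ← expI_mul_conj_expI]
    ring
  rw [ofReal_mul, ecfD_eq_sum_sum_centering, ofReal_sq_norm_sum_sum, ofReal_mul]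
  simp only [sum_mul, mul_sum, hterm]

lemma hasSum_ofReal_sq_norm_ecfD_mul {v : ℤ → ℝ} (hvsym : ∀ r : ℤ, v (-r) = v r)
    (hvsum : Summable v) (n : ℕ) (a b : ℕ → ℝ) :
    HasSum (fun r : ℤ × ℤ => ((‖ecfD n a b r‖ ^ 2 * (v r.1 * v r.2) : ℝ) : ℂ))
      ((n : ℂ)⁻¹ ^ 2 * ∑ j ∈ range n, ∑ k ∈ range n, ∑ l ∈ range n, ∑ m ∈ range n,
          centering (n : ℂ)⁻¹ j l * centering (n : ℂ)⁻¹ k m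
            * ((Jv v (a j - a k) : ℂ) * Jv v (b l - b m))) := by
  simp only [ofReal_sq_norm_ecfD_mul]
  exact .mul_left _ <| hasSum_sum fun j _ => hasSum_sum fun k _ => hasSum_sum fun l _ =>
    hasSum_sum fun m _ => (hasSum_mul_expI_mul_mul_expI hvsym hvsum _ _).mul_left _

theorem Tnw_closed_form_general
    (v : ℤ → ℝ) (hvsym : ∀ r : ℤ, v (-r) = v r)
    (hvsum : Summable v) (n : ℕ) (a b : ℕ → ℝ) :
    (n : ℝ) * ∑' r : ℤ × ℤ, ‖ecfD n a b r‖ ^ 2 * (v r.1 * v r.2)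
      = (1 / (n : ℝ)) * ∑ j ∈ Finset.range n, ∑ k ∈ Finset.range n,
            Jv v (a j - a k) * Jv v (b j - b k)
        + (1 / (n : ℝ) ^ 3)
            * (∑ j ∈ Finset.range n, ∑ k ∈ Finset.range n, Jv v (a j - a k))
            * (∑ j ∈ Finset.range n, ∑ k ∈ Finset.range n, Jv v (b j - b k))
        - (2 / (n : ℝ) ^ 2) * ∑ j ∈ Finset.range n, ∑ k ∈ Finset.range n,
            ∑ l ∈ Finset.range n, Jv v (a j - a k) * Jv v (b j - b l) := by
  have hJ (x : ℕ → ℝ) (j k : ℕ) : (Jv v (x j - x k) : ℂ) = Jv v (x k - x j) := by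
    rw [← neg_sub, Jv_neg]
  have hsum := hasSum_ofReal_sq_norm_ecfD_mul hvsym hvsum n a b
  rw [sum_centering_mul_centering_mul_mul _ _ (hJ a) (hJ b)] at hsum
  apply ofReal_injective
  rw [ofReal_mul, ofReal_tsum, hsum.tsum_eq]
  push_cast
  rcases eq_or_ne (n : ℂ) 0 with hn | hn
  · simp [hn]
  · field_simp

/-- Closed form of the statistic `T_{n,w}` for a product weight `w(r₁,r₂) = v(r₁)v(r₂)` with
`v` nonnegative, summable and symmetric about zero, in terms of the kernel `J_c^{(v)}` of
pairwise differences of the sample. -/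
theorem Tnw_closed_form
    (v : ℤ → ℝ) (hv0 : ∀ r, 0 ≤ v r) (hvsym : ∀ r : ℤ, v (-r) = v r)
    (hvsum : Summable v) (n : ℕ) (hn : 0 < n) (a b : ℕ → ℝ) :
    (n : ℝ) * ∑' r : ℤ × ℤ, ‖ecfD n a b r‖ ^ 2 * (v r.1 * v r.2)
      = (1 / (n : ℝ)) * ∑ j ∈ Finset.range n, ∑ k ∈ Finset.range n,
            Jv v (a j - a k) * Jv v (b j - b k)
        + (1 / (n : ℝ) ^ 3)
            * (∑ j ∈ Finset.range n, ∑ k ∈ Finset.range n, Jv v (a j - a k))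
            * (∑ j ∈ Finset.range n, ∑ k ∈ Finset.range n, Jv v (b j - b k))
        - (2 / (n : ℝ) ^ 2) * ∑ j ∈ Finset.range n, ∑ k ∈ Finset.range n,
            ∑ l ∈ Finset.range n, Jv v (a j - a k) * Jv v (b j - b l) :=
  Tnw_closed_form_general v hvsym hvsum n a b
end
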